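/- arXiv:2408.03711 — 8 statements merged into one kernel-verified Lean document; each statement's English description precedes it below -/
import Mathlib

section
/- Let m ≥ 0 be an integer, let φ : 𝔻 → 𝔻 be holomorphic, let c : 𝔻² → ℂ be holomorphic, and let f : 𝔻² → ℂ be holomorphic with (∂₁^i f)(z, z) = 0 for all z ∈ 𝔻 and all integers 0 ≤ i ≤ m. Then the holomorphic function g : 𝔻² → ℂ defined by g(z₁, z₂) = c(z₁, z₂) · f(φ(z₁), φ(z₂)) also satisfies (∂₁^i g)(z, z) = 0 for all z ∈ 𝔻 and all 0 ≤ i ≤ m. (This is the pointwise content of Proposition 2.1(i): each subspace M_m of functions whose first m ∂₁-derivatives vanish on the diagonal is invariant under every weighted composition operator f ↦ c·(f∘(φ×φ)).) -/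
open Metric Set

/-- The partial derivative of a function of two complex variables with respect to
the first variable. -/
noncomputable def d1 (f : ℂ × ℂ → ℂ) : ℂ × ℂ → ℂ :=
  fun p => deriv (fun z => f (z, p.2)) p.1

/-! Since `∂₁` does not touch the second variable, the claim is about one variable: with
`C := c(·, z)` and `F := f(·, φ z)`, if `F` vanishes to order `m` at `φ z` then so does
`C · (F ∘ φ)` at `z`. Induct on the order, for all `C` and `F` at once:
`(C · F ∘ φ)' = C' · F ∘ φ + (C φ') · F' ∘ φ` is a sum of two functions of the same shape,
the second one built from `F'`, which vanishes to one order less. -/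

theorem iterate_d1_apply (k : ℕ) (a : ℂ × ℂ → ℂ) (u w : ℂ) :
    d1^[k] a (u, w) = iteratedDeriv k (fun z => a (z, w)) u := by
  induction k generalizing a with
  | zero => rfl
  | succ k ih => rw [Function.iterate_succ_apply, ih, iteratedDeriv_succ']; rfl

theorem DifferentiableOn.comp_prodMk_const {𝕜 E F G : Type*} [NontriviallyNormedField 𝕜]
    [NormedAddCommGroup E] [NormedSpace 𝕜 E] [NormedAddCommGroup F] [NormedSpace 𝕜 F]
    [NormedAddCommGroup G] [NormedSpace 𝕜 G] {a : E × F → G} {s : Set E} {t : Set F}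
    (ha : DifferentiableOn 𝕜 a (s ×ˢ t)) {w : F} (hw : w ∈ t) :
    DifferentiableOn 𝕜 (fun z => a (z, w)) s :=
  ha.comp (differentiableOn_id.prodMk (differentiableOn_const w)) fun _ hz => ⟨hz, hw⟩

section WeightedComposition

variable {s t : Set ℂ} {φ C F : ℂ → ℂ}

theorem deriv_mul_comp_eqOn (hs : IsOpen s) (ht : IsOpen t) (hφ : DifferentiableOn ℂ φ s)
    (hφst : MapsTo φ s t) (hC : DifferentiableOn ℂ C s) (hF : DifferentiableOn ℂ F t) :
    EqOn (deriv fun u => C u * F (φ u))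
      ((fun u => deriv C u * F (φ u)) + fun u => C u * deriv φ u * deriv F (φ u)) s := by
  intro u hu
  have hCu := (hC.differentiableAt (hs.mem_nhds hu)).hasDerivAt
  have hφu := (hφ.differentiableAt (hs.mem_nhds hu)).hasDerivAt
  have hFu := (hF.differentiableAt (ht.mem_nhds (hφst hu))).hasDerivAt
  refine (hCu.mul (hFu.comp u hφu)).deriv.trans ?_
  simp only [Pi.add_apply, Function.comp_apply]
  ring

theorem iteratedDeriv_mul_comp_eq_zero (hs : IsOpen s) (ht : IsOpen t)
    (hφ : DifferentiableOn ℂ φ s) (hφst : MapsTo φ s t) {z : ℂ} (hz : z ∈ s) (n : ℕ)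
    (hC : DifferentiableOn ℂ C s) (hF : DifferentiableOn ℂ F t)
    (hvanish : ∀ k ≤ n, iteratedDeriv k F (φ z) = 0) :
    iteratedDeriv n (fun u => C u * F (φ u)) z = 0 := by
  induction n generalizing C F with
  | zero =>
    rw [iteratedDeriv_zero]
    exact mul_eq_zero_of_right (C z) (by simpa using hvanish 0 le_rfl)
  | succ n ih =>
    have hs_nhds : s ∈ nhds z := hs.mem_nhds hz
    have hC' : DifferentiableOn ℂ (deriv C) s := hC.deriv hs
    have hCφ' : DifferentiableOn ℂ (fun u => C u * deriv φ u) s := hC.mul (hφ.deriv hs)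
    have hF' : DifferentiableOn ℂ (deriv F) t := hF.deriv ht
    have hcont : ∀ {A H : ℂ → ℂ}, DifferentiableOn ℂ A s → DifferentiableOn ℂ H t →
        ContDiffAt ℂ n (fun u => A u * H (φ u)) z := fun hA hH =>
      ((hA.mul (hH.comp hφ hφst)).contDiffOn hs).contDiffAt hs_nhds
    have h₁ : iteratedDeriv n (fun u => deriv C u * F (φ u)) z = 0 :=
      ih hC' hF fun k hk => hvanish k (hk.trans n.le_succ)
    have h₂ : iteratedDeriv n (fun u => C u * deriv φ u * deriv F (φ u)) z = 0 :=
      ih hCφ' hF' fun k hk => by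
        rw [← iteratedDeriv_succ']
        exact hvanish (k + 1) (Nat.succ_le_succ hk)
    have hderiv := (deriv_mul_comp_eqOn hs ht hφ hφst hC hF).eventuallyEq_of_mem hs_nhds
    rw [iteratedDeriv_succ', hderiv.iteratedDeriv_eq,
      iteratedDeriv_add (hcont hC' hF) (hcont hCφ' hF'), h₁, h₂, add_zero]

end WeightedComposition

/-- each subspace `M_m` of functions whose first `m` `∂₁`-derivatives vanish
on the diagonal is invariant under every weighted composition operator
`f ↦ c · (f ∘ (φ × φ))`. -/
theorem stmt0 (m : ℕ) (φ : ℂ → ℂ) (c f : ℂ × ℂ → ℂ)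
    (hφmap : MapsTo φ (ball (0 : ℂ) 1) (ball (0 : ℂ) 1))
    (hφ : DifferentiableOn ℂ φ (ball (0 : ℂ) 1))
    (hc : DifferentiableOn ℂ c (ball (0 : ℂ) 1 ×ˢ ball (0 : ℂ) 1))
    (hf : DifferentiableOn ℂ f (ball (0 : ℂ) 1 ×ˢ ball (0 : ℂ) 1))
    (hvanish : ∀ i ≤ m, ∀ z ∈ ball (0 : ℂ) 1, d1^[i] f (z, z) = 0) :
    ∀ i ≤ m, ∀ z ∈ ball (0 : ℂ) 1,
      d1^[i] (fun p => c p * f (φ p.1, φ p.2)) (z, z) = 0 := by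
  intro i hi z hz
  rw [iterate_d1_apply]
  refine iteratedDeriv_mul_comp_eq_zero isOpen_ball isOpen_ball hφ hφmap hz i
    (hc.comp_prodMk_const hz) (hf.comp_prodMk_const (hφmap hz)) fun k hk => ?_
  rw [← iterate_d1_apply]
  exact hvanish k (hk.trans hi) (φ z) (hφmap hz)
end

section
/- For each integer m ≥ 0, the closed linear span in H of the set { P_m k_{(w,w)}^{(m)} : w ∈ 𝔻 } is equal to the subspace S_m. Equivalently, if f ∈ S_m satisfies ⟨f, P_m k_{(w,w)}^{(m)}⟩ = 0 for every w ∈ 𝔻, then f = 0. (Lemma 2.2.) -/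
open Metric Set

namespace Submodule

variable {𝕜 E : Type*} [RCLike 𝕜] [NormedAddCommGroup E] [InnerProductSpace 𝕜 E]

theorem isClosed_of_hasOrthogonalProjection (K : Submodule 𝕜 E) [K.HasOrthogonalProjection] :
    IsClosed (K : Set E) := by
  rw [← K.orthogonal_orthogonal]
  exact Kᗮ.isClosed_orthogonal

theorem inner_left_eq_of_sub_mem_orthogonal {K : Submodule 𝕜 E} {u p v : E} (hp : u - p ∈ Kᗮ)
    (hv : v ∈ K) : inner 𝕜 p v = inner 𝕜 u v := by
  have h := (K.mem_orthogonal' (u - p)).1 hp v hv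
  rwa [inner_sub_left, sub_eq_zero, eq_comm] at h

theorem topologicalClosure_span_eq_of_forall_inner_eq_zero [CompleteSpace E]
    {K : Submodule 𝕜 E} [K.HasOrthogonalProjection] {s : Set E} (hs : s ⊆ K)
    (h : ∀ v ∈ K, (∀ u ∈ s, inner 𝕜 u v = 0) → v = 0) :
    (span 𝕜 s).topologicalClosure = K := by
  have hle : (span 𝕜 s).topologicalClosure ≤ K :=
    topologicalClosure_minimal _ (span_le.2 hs) K.isClosed_of_hasOrthogonalProjection
  have hbot : (span 𝕜 s).topologicalClosureᗮ ⊓ K = ⊥ := by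
    refine (Submodule.eq_bot_iff _).2 fun v ⟨hperp, hv⟩ => h v hv fun u hu => ?_
    rw [orthogonal_closure] at hperp
    exact (mem_orthogonal _ v).1 hperp u (subset_span hu)
  rw [← sup_orthogonal_inf_of_hasOrthogonalProjection hle, hbot, sup_bot_eq]

end Submodule

theorem eq_zero_of_mem_of_iterate_d1_diag_eq_zero
    {H : Type*} [NormedAddCommGroup H] [InnerProductSpace ℂ H]
    (J : H →ₗ[ℂ] (ℂ × ℂ → ℂ)) {M S : ℕ → Submodule ℂ H}
    (hM : ∀ (m : ℕ) (f : H),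
      f ∈ M m ↔ ∀ i ≤ m, ∀ z ∈ ball (0 : ℂ) 1, d1^[i] (J f) (z, z) = 0)
    (hS0 : S 0 = (M 0)ᗮ) (hSsucc : ∀ m : ℕ, S (m + 1) = M m ⊓ (M (m + 1))ᗮ)
    {m : ℕ} {f : H} (hf : f ∈ S m)
    (hdiag : ∀ z ∈ ball (0 : ℂ) 1, d1^[m] (J f) (z, z) = 0) : f = 0 := by
  have hperp : f ∈ (M m)ᗮ := by
    cases m with
    | zero => rwa [hS0] at hf
    | succ n => rw [hSsucc n] at hf; exact hf.2
  have hmem : f ∈ M m := by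
    refine (hM m f).2 fun i hi z hz => ?_
    rcases hi.lt_or_eq with hlt | rfl
    · obtain ⟨n, rfl⟩ : ∃ n, m = n + 1 := Nat.exists_eq_succ_of_ne_zero (by omega)
      rw [hSsucc n] at hf
      exact (hM n f).1 hf.1 i (by omega) z hz
    · exact hdiag z hz
  exact Submodule.disjoint_def.1 (M m).orthogonal_disjoint f hmem hperp

theorem stmt3_general
    {H : Type*} [NormedAddCommGroup H] [InnerProductSpace ℂ H] [CompleteSpace H]
    (J : H →ₗ[ℂ] (ℂ × ℂ → ℂ))
    (k : ℂ × ℂ → ℕ → H)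
    (hk : ∀ f : H, ∀ w ∈ ball (0 : ℂ) 1 ×ˢ ball (0 : ℂ) 1, ∀ j : ℕ,
      @inner ℂ H _ (k w j) f = d1^[j] (J f) w)
    (M : ℕ → Submodule ℂ H)
    (hM : ∀ (m : ℕ) (f : H),
      f ∈ M m ↔ ∀ i ≤ m, ∀ z ∈ ball (0 : ℂ) 1, d1^[i] (J f) (z, z) = 0)
    (S : ℕ → Submodule ℂ H)
    (hS0 : S 0 = (M 0)ᗮ)
    (hSsucc : ∀ m : ℕ, S (m + 1) = M m ⊓ (M (m + 1))ᗮ)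
    (P : ℕ → H → H)
    (hPmem : ∀ (m : ℕ) (f : H), P m f ∈ S m)
    (hPorth : ∀ (m : ℕ) (f : H), f - P m f ∈ (S m)ᗮ)
    (m : ℕ) :
    (Submodule.span ℂ {x : H | ∃ w ∈ ball (0 : ℂ) 1, x = P m (k (w, w) m)}).topologicalClosure
      = S m := by
  have : (S m).HasOrthogonalProjection := ⟨fun f => ⟨P m f, hPmem m f, hPorth m f⟩⟩
  refine Submodule.topologicalClosure_span_eq_of_forall_inner_eq_zero ?_ fun f hf hperp => ?_
  · rintro _ ⟨w, -, rfl⟩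
    exact hPmem m _
  refine eq_zero_of_mem_of_iterate_d1_diag_eq_zero J hM hS0 hSsucc hf fun z hz => ?_
  rw [← hk f (z, z) ⟨hz, hz⟩ m,
    ← Submodule.inner_left_eq_of_sub_mem_orthogonal (hPorth m _) hf]
  exact hperp _ ⟨z, hz, rfl⟩

/-- Lemma 2.2: the closed span of `{P_m k_{(w,w)}^{(m)} : w ∈ 𝔻}` equals `S_m`. -/
theorem stmt3
    {H : Type*} [NormedAddCommGroup H] [InnerProductSpace ℂ H] [CompleteSpace H]
    (J : H →ₗ[ℂ] (ℂ × ℂ → ℂ)) (hJinj : Function.Injective J)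
    (hJhol : ∀ f : H, DifferentiableOn ℂ (J f) (ball (0 : ℂ) 1 ×ˢ ball (0 : ℂ) 1))
    (k : ℂ × ℂ → ℕ → H)
    (hk : ∀ f : H, ∀ w ∈ ball (0 : ℂ) 1 ×ˢ ball (0 : ℂ) 1, ∀ j : ℕ,
      @inner ℂ H _ (k w j) f = d1^[j] (J f) w)
    (M : ℕ → Submodule ℂ H)
    (hM : ∀ (m : ℕ) (f : H),
      f ∈ M m ↔ ∀ i ≤ m, ∀ z ∈ ball (0 : ℂ) 1, d1^[i] (J f) (z, z) = 0)
    (hMclosed : ∀ m : ℕ, IsClosed (M m : Set H))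
    (S : ℕ → Submodule ℂ H)
    (hS0 : S 0 = (M 0)ᗮ)
    (hSsucc : ∀ m : ℕ, S (m + 1) = M m ⊓ (M (m + 1))ᗮ)
    (P : ℕ → H → H)
    (hPmem : ∀ (m : ℕ) (f : H), P m f ∈ S m)
    (hPorth : ∀ (m : ℕ) (f : H), f - P m f ∈ (S m)ᗮ)
    (m : ℕ) :
    (Submodule.span ℂ {x : H | ∃ w ∈ ball (0 : ℂ) 1, x = P m (k (w, w) m)}).topologicalClosure
      = S m :=
  stmt3_general J k hk M hM S hS0 hSsucc P hPmem hPorth m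
end

section
/- Fix an integer m ≥ 0. Suppose that for every φ ∈ Aut(𝔻) there exist a bounded linear operator π_φ : H → H and a holomorphic function c_φ : 𝔻² → ℂ with c_φ(0, 0) ≠ 0, such that (π_φ f)(z₁, z₂) = c_φ(z₁, z₂) · f(φ(z₁), φ(z₂)) for all f ∈ H and (z₁, z₂) ∈ 𝔻². Then S_m ≠ {0} if and only if P_m k_{(0,0)}^{(m)} ≠ 0. (Lemma 2.3.) -/
open Metric Set

/-- A function `ℂ → ℂ` restricts to a biholomorphic automorphism of the unit disc. -/
def IsDiscAut (φ : ℂ → ℂ) : Prop :=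
  Set.MapsTo φ (ball (0 : ℂ) 1) (ball (0 : ℂ) 1) ∧
  DifferentiableOn ℂ φ (ball (0 : ℂ) 1) ∧
  ∃ ψ : ℂ → ℂ, Set.MapsTo ψ (ball (0 : ℂ) 1) (ball (0 : ℂ) 1) ∧
    DifferentiableOn ℂ ψ (ball (0 : ℂ) 1) ∧
    (∀ z ∈ ball (0 : ℂ) 1, ψ (φ z) = z) ∧ (∀ z ∈ ball (0 : ℂ) 1, φ (ψ z) = z)

/-!
For the nontrivial direction assume `P_m k = 0`, where `k = k_{(0,0)}^{(m)}`, and let `f ∈ S_m`, so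
`f ∈ M_{m-1}` and `f ⊥ M_m`; it suffices to show `∂₁^m f(z, z) = 0` for every `z ∈ 𝔻`. Let `φ` be
the Möbius automorphism with `φ 0 = z`. Factoring `f(ζ, φ w) = (ζ - φ w)^m h(ζ)` and
`φ ζ - φ w = (ζ - w) q(ζ)` shows that `π_φ f ∈ M_{m-1}` and
`∂₁^m (π_φ f)(0, 0) = c_φ(0, 0) φ'(0)^m ∂₁^m f(z, z)`. Since `M_{m-1} = M_m ⊕ S_m` and `k` is
orthogonal to `M_m` and to `S_m`, the left side is `⟨k, π_φ f⟩ = 0`, while `c_φ(0, 0) ≠ 0` and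
`φ'(0) ≠ 0`.
-/

open Filter Topology ComplexConjugate

section OneVariable

variable {𝕜 : Type*} [NontriviallyNormedField 𝕜]

theorem iteratedDeriv_pow_sub_apply_self (a : 𝕜) (k m : ℕ) :
    iteratedDeriv k (fun ζ => (ζ - a) ^ m) a = if k = m then (m.factorial : 𝕜) else 0 := by
  simp only [iteratedDeriv_comp_sub_const k (· ^ m) a, sub_self, iteratedDeriv_fun_pow_zero]
  split_ifs <;> simp

theorem iteratedDeriv_pow_sub_mul_of_lt {g : 𝕜 → 𝕜} {a : 𝕜} {i m : ℕ}
    (hg : ContDiffAt 𝕜 i g a) (hi : i < m) :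
    iteratedDeriv i (fun ζ => (ζ - a) ^ m * g ζ) a = 0 := by
  rw [iteratedDeriv_fun_mul (by fun_prop) hg]
  refine Finset.sum_eq_zero fun k hk => ?_
  have hkm : k ≠ m := by grind
  simp [iteratedDeriv_pow_sub_apply_self, hkm]

theorem iteratedDeriv_pow_sub_mul_self {g : 𝕜 → 𝕜} {a : 𝕜} {m : ℕ} (hg : ContDiffAt 𝕜 m g a) :
    iteratedDeriv m (fun ζ => (ζ - a) ^ m * g ζ) a = m.factorial * g a := by
  rw [iteratedDeriv_fun_mul (by fun_prop) hg, Finset.sum_range_succ, Finset.sum_eq_zero]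
  · simp [iteratedDeriv_pow_sub_apply_self]
  · intro k hk
    have hkm : k ≠ m := by grind
    simp [iteratedDeriv_pow_sub_apply_self, hkm]

end OneVariable

section Analytic

variable {𝕜 : Type*} [NontriviallyNormedField 𝕜] [CharZero 𝕜] [CompleteSpace 𝕜]

theorem AnalyticAt.exists_eventuallyEq_pow_sub_mul {F : 𝕜 → 𝕜} {a : 𝕜} {m : ℕ}
    (hF : AnalyticAt 𝕜 F a) (hF0 : ∀ j < m, iteratedDeriv j F a = 0) :
    ∃ h : 𝕜 → 𝕜, AnalyticAt 𝕜 h a ∧ F =ᶠ[𝓝 a] fun ζ => (ζ - a) ^ m * h ζ := by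
  simpa only [smul_eq_mul, EventuallyEq] using
    (natCast_le_analyticOrderAt hF).mp
      ((natCast_le_analyticOrderAt_iff_iteratedDeriv_eq_zero hF).mpr hF0)

theorem iteratedDeriv_mul_comp_of_iteratedDeriv_eq_zero {c F φ : 𝕜 → 𝕜} {w : 𝕜} {m : ℕ}
    (hc : AnalyticAt 𝕜 c w) (hφ : AnalyticAt 𝕜 φ w) (hF : AnalyticAt 𝕜 F (φ w))
    (hF0 : ∀ j < m, iteratedDeriv j F (φ w) = 0) :
    (∀ i < m, iteratedDeriv i (fun ζ => c ζ * F (φ ζ)) w = 0) ∧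
      iteratedDeriv m (fun ζ => c ζ * F (φ ζ)) w =
        c w * deriv φ w ^ m * iteratedDeriv m F (φ w) := by
  obtain ⟨h, hh, hFh⟩ := hF.exists_eventuallyEq_pow_sub_mul hF0
  obtain ⟨q, hq, hφq⟩ :=
    (hφ.fun_sub (analyticAt_const (v := φ w))).exists_eventuallyEq_pow_sub_mul (m := 1) (by simp)
  have hq_w : deriv φ w = q w := by
    rw [← deriv_sub_const (φ w), ← iteratedDeriv_one, hφq.iteratedDeriv_eq,
      iteratedDeriv_pow_sub_mul_self hq.contDiffAt]
    simp
  have hg : AnalyticAt 𝕜 (fun ζ => c ζ * q ζ ^ m * h (φ ζ)) w :=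
    (hc.mul (hq.pow m)).mul (hh.comp hφ)
  have hfac : (fun ζ => c ζ * F (φ ζ)) =ᶠ[𝓝 w]
      fun ζ => (ζ - w) ^ m * (c ζ * q ζ ^ m * h (φ ζ)) := by
    filter_upwards [hφ.continuousAt.eventually hFh, hφq] with ζ hFζ hφζ
    rw [hFζ, hφζ, pow_one, mul_pow]
    ring
  refine ⟨fun i hi => ?_, ?_⟩
  · rw [hfac.iteratedDeriv_eq, iteratedDeriv_pow_sub_mul_of_lt hg.contDiffAt hi]
  · rw [hfac.iteratedDeriv_eq, iteratedDeriv_pow_sub_mul_self hg.contDiffAt,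
      hFh.iteratedDeriv_eq, iteratedDeriv_pow_sub_mul_self hh.contDiffAt, hq_w]
    ring

end Analytic

theorem d1_iterate_apply (F : ℂ × ℂ → ℂ) (i : ℕ) (z₁ z₂ : ℂ) :
    d1^[i] F (z₁, z₂) = iteratedDeriv i (fun ζ => F (ζ, z₂)) z₁ := by
  induction i generalizing F with
  | zero => rfl
  | succ n ih => rw [Function.iterate_succ_apply, ih, iteratedDeriv_succ']; rfl

theorem DifferentiableOn.analyticAt_slice_fst {F : ℂ × ℂ → ℂ}
    (hF : DifferentiableOn ℂ F (ball (0 : ℂ) 1 ×ˢ ball (0 : ℂ) 1))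
    {z₁ z₂ : ℂ} (hz₁ : z₁ ∈ ball (0 : ℂ) 1) (hz₂ : z₂ ∈ ball (0 : ℂ) 1) :
    AnalyticAt ℂ (fun ζ => F (ζ, z₂)) z₁ := by
  have hslice : DifferentiableOn ℂ (fun ζ => F (ζ, z₂)) (ball (0 : ℂ) 1) :=
    hF.comp (differentiableOn_id.prodMk (differentiableOn_const z₂))
      fun ζ hζ => mk_mem_prod hζ hz₂
  exact hslice.analyticAt (isOpen_ball.mem_nhds hz₁)

theorem d1_iterate_mul_comp_diag {F G c : ℂ × ℂ → ℂ} {φ : ℂ → ℂ} {m : ℕ}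
    (hF : DifferentiableOn ℂ F (ball (0 : ℂ) 1 ×ˢ ball (0 : ℂ) 1))
    (hc : DifferentiableOn ℂ c (ball (0 : ℂ) 1 ×ˢ ball (0 : ℂ) 1))
    (hφ : MapsTo φ (ball (0 : ℂ) 1) (ball (0 : ℂ) 1)) (hφd : DifferentiableOn ℂ φ (ball (0 : ℂ) 1))
    (hG : ∀ z ∈ ball (0 : ℂ) 1 ×ˢ ball (0 : ℂ) 1, G z = c z * F (φ z.1, φ z.2))
    (hF0 : ∀ i < m, ∀ z ∈ ball (0 : ℂ) 1, d1^[i] F (z, z) = 0) {w : ℂ} (hw : w ∈ ball (0 : ℂ) 1) :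
    (∀ i < m, d1^[i] G (w, w) = 0) ∧
      d1^[m] G (w, w) = c (w, w) * deriv φ w ^ m * d1^[m] F (φ w, φ w) := by
  have hslice : (fun ζ => G (ζ, w)) =ᶠ[𝓝 w] fun ζ => c (ζ, w) * F (φ ζ, φ w) := by
    filter_upwards [isOpen_ball.mem_nhds hw] with ζ hζ using hG _ (mk_mem_prod hζ hw)
  simp only [d1_iterate_apply, hslice.iteratedDeriv_eq]
  exact iteratedDeriv_mul_comp_of_iteratedDeriv_eq_zero (F := fun ξ => F (ξ, φ w))
    (hc.analyticAt_slice_fst hw hw) (hφd.analyticAt (isOpen_ball.mem_nhds hw))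
    (hF.analyticAt_slice_fst (hφ hw) (hφ hw))
    fun j hj => by simpa only [d1_iterate_apply] using hF0 j hj _ (hφ hw)

theorem IsDiscAut.deriv_ne_zero {φ : ℂ → ℂ} (hφ : IsDiscAut φ) {w : ℂ}
    (hw : w ∈ ball (0 : ℂ) 1) : deriv φ w ≠ 0 := by
  obtain ⟨hmaps, hd, ψ, -, hψd, hψφ, -⟩ := hφ
  have hcomp : HasDerivAt (ψ ∘ φ) (deriv ψ (φ w) * deriv φ w) w :=
    (hψd.differentiableAt (isOpen_ball.mem_nhds (hmaps hw))).hasDerivAt.comp w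
      (hd.differentiableAt (isOpen_ball.mem_nhds hw)).hasDerivAt
  have hid : ψ ∘ φ =ᶠ[𝓝 w] id := by
    filter_upwards [isOpen_ball.mem_nhds hw] with ζ hζ using hψφ ζ hζ
  exact right_ne_zero_of_mul_eq_one
    ((hcomp.congr_of_eventuallyEq hid.symm).unique (hasDerivAt_id w))

noncomputable def moebius (a w : ℂ) : ℂ := (w + a) / (1 + conj a * w)

theorem norm_add_lt_norm_one_add_conj_mul {a w : ℂ} (ha : a ∈ ball (0 : ℂ) 1)
    (hw : w ∈ ball (0 : ℂ) 1) : ‖w + a‖ < ‖1 + conj a * w‖ := by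
  rw [mem_ball_zero_iff] at ha hw
  have hnorm_sq : ‖1 + conj a * w‖ ^ 2 - ‖w + a‖ ^ 2 = (1 - ‖a‖ ^ 2) * (1 - ‖w‖ ^ 2) := by
    simp only [← Complex.normSq_eq_norm_sq, Complex.normSq_apply, Complex.add_re, Complex.add_im,
      Complex.mul_re, Complex.mul_im, Complex.conj_re, Complex.conj_im, Complex.one_re,
      Complex.one_im]
    ring
  refine lt_of_pow_lt_pow_left₀ 2 (norm_nonneg _) ?_
  nlinarith [mul_pos (by nlinarith [norm_nonneg a] : 0 < 1 - ‖a‖ ^ 2)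
    (by nlinarith [norm_nonneg w] : 0 < 1 - ‖w‖ ^ 2)]

theorem one_add_conj_mul_ne_zero {a w : ℂ} (ha : a ∈ ball (0 : ℂ) 1) (hw : w ∈ ball (0 : ℂ) 1) :
    1 + conj a * w ≠ 0 :=
  norm_pos_iff.mp ((norm_nonneg _).trans_lt (norm_add_lt_norm_one_add_conj_mul ha hw))

theorem mapsTo_moebius {a : ℂ} (ha : a ∈ ball (0 : ℂ) 1) :
    MapsTo (moebius a) (ball (0 : ℂ) 1) (ball (0 : ℂ) 1) := fun w hw => by
  rw [moebius, mem_ball_zero_iff, norm_div,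
    div_lt_one (norm_pos_iff.mpr (one_add_conj_mul_ne_zero ha hw))]
  exact norm_add_lt_norm_one_add_conj_mul ha hw

theorem differentiableOn_moebius {a : ℂ} (ha : a ∈ ball (0 : ℂ) 1) :
    DifferentiableOn ℂ (moebius a) (ball (0 : ℂ) 1) := fun w hw =>
  (DifferentiableAt.fun_div (c := fun w => w + a) (d := fun w => 1 + conj a * w)
    (by fun_prop) (by fun_prop)
    (one_add_conj_mul_ne_zero ha hw)).differentiableWithinAt

theorem moebius_neg_moebius {a w : ℂ} (ha : a ∈ ball (0 : ℂ) 1) (hw : w ∈ ball (0 : ℂ) 1) :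
    moebius (-a) (moebius a w) = w := by
  have hden := one_add_conj_mul_ne_zero (a := -a) (by simpa using ha) (mapsTo_moebius ha hw)
  have hw' : 1 + w * conj a ≠ 0 := mul_comm w (conj a) ▸ one_add_conj_mul_ne_zero ha hw
  simp only [moebius, map_neg] at hden ⊢
  rw [div_eq_iff hden]
  field_simp
  ring

theorem isDiscAut_moebius {a : ℂ} (ha : a ∈ ball (0 : ℂ) 1) : IsDiscAut (moebius a) := by
  have ha' : -a ∈ ball (0 : ℂ) 1 := by simpa using ha
  refine ⟨mapsTo_moebius ha, differentiableOn_moebius ha, moebius (-a), mapsTo_moebius ha',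
    differentiableOn_moebius ha', fun w hw => moebius_neg_moebius ha hw, fun w hw => ?_⟩
  simpa using moebius_neg_moebius ha' hw

theorem d1_iterate_diag_eq_zero_of_vanishing_at_origin
    {H : Type*} [NormedAddCommGroup H] [NormedSpace ℂ H]
    (J : H →ₗ[ℂ] (ℂ × ℂ → ℂ))
    (hJhol : ∀ f : H, DifferentiableOn ℂ (J f) (ball (0 : ℂ) 1 ×ˢ ball (0 : ℂ) 1))
    (hπ : ∀ φ : ℂ → ℂ, IsDiscAut φ →
      ∃ (T : H →L[ℂ] H) (cφ : ℂ × ℂ → ℂ),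
        DifferentiableOn ℂ cφ (ball (0 : ℂ) 1 ×ˢ ball (0 : ℂ) 1) ∧
        cφ (0, 0) ≠ 0 ∧
        ∀ f : H, ∀ z ∈ ball (0 : ℂ) 1 ×ˢ ball (0 : ℂ) 1,
          J (T f) z = cφ z * J f (φ z.1, φ z.2))
    {m : ℕ} (h0 : ∀ g : H, (∀ i < m, ∀ z ∈ ball (0 : ℂ) 1, d1^[i] (J g) (z, z) = 0) →
      d1^[m] (J g) (0, 0) = 0)
    {f : H} (hf : ∀ i < m, ∀ z ∈ ball (0 : ℂ) 1, d1^[i] (J f) (z, z) = 0)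
    {z : ℂ} (hz : z ∈ ball (0 : ℂ) 1) :
    d1^[m] (J f) (z, z) = 0 := by
  have h0mem : (0 : ℂ) ∈ ball (0 : ℂ) 1 := mem_ball_self one_pos
  have hφ := isDiscAut_moebius hz
  obtain ⟨T, c, hc, hc0, hT⟩ := hπ _ hφ
  have hTf := fun {w} => d1_iterate_mul_comp_diag (hJhol f) hc hφ.1 hφ.2.1 (hT f) hf (w := w)
  have hvanish := h0 (T f) fun i hi w hw => (hTf hw).1 i hi
  rw [(hTf h0mem).2, show moebius z 0 = z by simp [moebius]] at hvanish
  simpa [hc0, hφ.deriv_ne_zero h0mem] using hvanish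

theorem Submodule.mem_orthogonal_of_mem_orthogonal_inf {𝕜 E : Type*} [RCLike 𝕜]
    [NormedAddCommGroup E] [InnerProductSpace 𝕜 E] {K₁ K₂ : Submodule 𝕜 E}
    [K₁.HasOrthogonalProjection] (h : K₁ ≤ K₂) {x : E} (h₁ : x ∈ K₁ᗮ) (h₂ : x ∈ (K₂ ⊓ K₁ᗮ)ᗮ) :
    x ∈ K₂ᗮ := by
  rw [← Submodule.sup_orthogonal_inf_of_hasOrthogonalProjection h, inf_comm K₁ᗮ,
    ← Submodule.inf_orthogonal]
  exact ⟨h₁, h₂⟩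

theorem stmt4_general
    {H : Type*} [NormedAddCommGroup H] [InnerProductSpace ℂ H] [CompleteSpace H]
    (J : H →ₗ[ℂ] (ℂ × ℂ → ℂ))
    (hJhol : ∀ f : H, DifferentiableOn ℂ (J f) (ball (0 : ℂ) 1 ×ˢ ball (0 : ℂ) 1))
    (k : ℂ × ℂ → ℕ → H)
    (hk : ∀ f : H, ∀ w ∈ ball (0 : ℂ) 1 ×ˢ ball (0 : ℂ) 1, ∀ j : ℕ,
      @inner ℂ H _ (k w j) f = d1^[j] (J f) w)
    (M : ℕ → Submodule ℂ H)
    (hM : ∀ (m : ℕ) (f : H),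
      f ∈ M m ↔ ∀ i ≤ m, ∀ z ∈ ball (0 : ℂ) 1, d1^[i] (J f) (z, z) = 0)
    (hMclosed : ∀ m : ℕ, IsClosed (M m : Set H))
    (S : ℕ → Submodule ℂ H)
    (hS0 : S 0 = (M 0)ᗮ)
    (hSsucc : ∀ m : ℕ, S (m + 1) = M m ⊓ (M (m + 1))ᗮ)
    (P : ℕ → H → H)
    (hPmem : ∀ (m : ℕ) (f : H), P m f ∈ S m)
    (hPorth : ∀ (m : ℕ) (f : H), f - P m f ∈ (S m)ᗮ)
    (hπ : ∀ φ : ℂ → ℂ, IsDiscAut φ →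
      ∃ (T : H →L[ℂ] H) (cφ : ℂ × ℂ → ℂ),
        DifferentiableOn ℂ cφ (ball (0 : ℂ) 1 ×ˢ ball (0 : ℂ) 1) ∧
        cφ (0, 0) ≠ 0 ∧
        ∀ f : H, ∀ z ∈ ball (0 : ℂ) 1 ×ˢ ball (0 : ℂ) 1,
          J (T f) z = cφ z * J f (φ z.1, φ z.2))
    (m : ℕ) :
    S m ≠ ⊥ ↔ P m (k ((0 : ℂ), (0 : ℂ)) m) ≠ 0 := by
  have h00 : ((0 : ℂ), (0 : ℂ)) ∈ ball (0 : ℂ) 1 ×ˢ ball (0 : ℂ) 1 := by simp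
  -- `N` is `M_{m-1}`, with `M_{-1} = H`.
  obtain ⟨N, hSN, hN⟩ : ∃ N : Submodule ℂ H, S m = N ⊓ (M m)ᗮ ∧
      ∀ f, f ∈ N ↔ ∀ i < m, ∀ z ∈ ball (0 : ℂ) 1, d1^[i] (J f) (z, z) = 0 := by
    cases m with
    | zero => exact ⟨⊤, by simp [hS0], by simp⟩
    | succ m => exact ⟨M m, hSsucc m, fun f => by simp [hM]⟩
  have hMN : M m ≤ N := fun f hf => (hN f).2 fun i hi => (hM m f).1 hf i hi.le
  have : CompleteSpace (M m) := (hMclosed m).completeSpace_coe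
  refine ⟨fun hS hP => hS ?_, fun hP hS => hP (by simpa [hS] using hPmem m (k (0, 0) m))⟩
  have hkM : k (0, 0) m ∈ (M m)ᗮ := (Submodule.mem_orthogonal' _ _).2 fun g hg => by
    rw [hk g _ h00]; exact (hM m g).1 hg m le_rfl 0 (mem_ball_self one_pos)
  have hkN : k (0, 0) m ∈ Nᗮ := Submodule.mem_orthogonal_of_mem_orthogonal_inf hMN hkM
    (by simpa [hSN, hP] using hPorth m (k (0, 0) m))
  have h0 : ∀ g : H, (∀ i < m, ∀ z ∈ ball (0 : ℂ) 1, d1^[i] (J g) (z, z) = 0) →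
      d1^[m] (J g) (0, 0) = 0 := fun g hg => by
    rw [← hk g _ h00]; exact (Submodule.mem_orthogonal' _ _).1 hkN g ((hN g).2 hg)
  refine (Submodule.eq_bot_iff _).2 fun f hf => ?_
  rw [hSN] at hf
  have hlow := (hN f).1 hf.1
  have hfM : f ∈ M m := (hM m f).2 fun i hi z hz => by
    rcases hi.lt_or_eq with hi | rfl
    · exact hlow i hi z hz
    · exact d1_iterate_diag_eq_zero_of_vanishing_at_origin J hJhol hπ h0 hlow hz
  exact inner_self_eq_zero.1 ((Submodule.mem_orthogonal' _ _).1 hf.2 f hfM)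

/-- Lemma 2.3: if for every disc automorphism `φ` there is a bounded weighted
composition operator with weight non-vanishing at the origin, then `S_m ≠ {0}` iff
`P_m k_{(0,0)}^{(m)} ≠ 0`. -/
theorem stmt4
    {H : Type*} [NormedAddCommGroup H] [InnerProductSpace ℂ H] [CompleteSpace H]
    (J : H →ₗ[ℂ] (ℂ × ℂ → ℂ)) (hJinj : Function.Injective J)
    (hJhol : ∀ f : H, DifferentiableOn ℂ (J f) (ball (0 : ℂ) 1 ×ˢ ball (0 : ℂ) 1))
    (k : ℂ × ℂ → ℕ → H)
    (hk : ∀ f : H, ∀ w ∈ ball (0 : ℂ) 1 ×ˢ ball (0 : ℂ) 1, ∀ j : ℕ,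
      @inner ℂ H _ (k w j) f = d1^[j] (J f) w)
    (M : ℕ → Submodule ℂ H)
    (hM : ∀ (m : ℕ) (f : H),
      f ∈ M m ↔ ∀ i ≤ m, ∀ z ∈ ball (0 : ℂ) 1, d1^[i] (J f) (z, z) = 0)
    (hMclosed : ∀ m : ℕ, IsClosed (M m : Set H))
    (S : ℕ → Submodule ℂ H)
    (hS0 : S 0 = (M 0)ᗮ)
    (hSsucc : ∀ m : ℕ, S (m + 1) = M m ⊓ (M (m + 1))ᗮ)
    (P : ℕ → H → H)
    (hPmem : ∀ (m : ℕ) (f : H), P m f ∈ S m)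
    (hPorth : ∀ (m : ℕ) (f : H), f - P m f ∈ (S m)ᗮ)
    (hπ : ∀ φ : ℂ → ℂ, IsDiscAut φ →
      ∃ (T : H →L[ℂ] H) (cφ : ℂ × ℂ → ℂ),
        DifferentiableOn ℂ cφ (ball (0 : ℂ) 1 ×ˢ ball (0 : ℂ) 1) ∧
        cφ (0, 0) ≠ 0 ∧
        ∀ f : H, ∀ z ∈ ball (0 : ℂ) 1 ×ˢ ball (0 : ℂ) 1,
          J (T f) z = cφ z * J f (φ z.1, φ z.2))
    (m : ℕ) :
    S m ≠ ⊥ ↔ P m (k ((0 : ℂ), (0 : ℂ)) m) ≠ 0 :=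
  stmt4_general J hJhol k hk M hM hMclosed S hS0 hSsucc P hPmem hPorth hπ m
end

section
/- For each integer m ≥ 0: (a) for every f ∈ S_m and every w ∈ 𝔻 one has (∂₁^m f)(w, w) = ⟨f, P_m k_{(w,w)}^{(m)}⟩; (b) the linear map Γ_m from S_m to functions on 𝔻 defined by (Γ_m f)(z) = (∂₁^m f)(z, z) is injective. Consequently, transporting the inner product of S_m to the image of Γ_m, the function K_m(z, w) := ⟨P_m k_{(w,w)}^{(m)}, P_m k_{(z,z)}^{(m)}⟩ is a reproducing kernel for that image: ⟨Γ_m f, Γ_m(P_m k_{(w,w)}^{(m)})⟩ = (Γ_m f)(w) for all f ∈ S_m, w ∈ 𝔻. (Proposition 2.4.) -/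
/-!
Both parts come from the reproducing property `⟨k_w^{(m)}, f⟩ = (∂₁^m f)(w)`. For `f ∈ S_m`
the vector `k_{(w,w)}^{(m)} - P_m k_{(w,w)}^{(m)}` is orthogonal to `f`, which gives (a). By the
same property `Γ_m` is linear, and a vector of `S_m ⊆ M_{m-1}` killed by `Γ_m` lies in `M_m`,
hence in `M_m ∩ M_mᗮ = 0`, which gives (b).
-/

open Metric Set

section Orthogonal

variable {𝕜 E : Type*} [RCLike 𝕜] [NormedAddCommGroup E] [InnerProductSpace 𝕜 E]

theorem inner_eq_inner_of_sub_mem_orthogonal {K : Submodule 𝕜 E} {x p f : E} (hf : f ∈ K)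
    (hx : x - p ∈ Kᗮ) : inner 𝕜 p f = inner 𝕜 x f := by
  rw [eq_comm, ← sub_eq_zero, ← inner_sub_left]
  exact Submodule.inner_left_of_mem_orthogonal hf hx

end Orthogonal

section Filtration

variable {α : Type*} {M : ℕ → Set α} {Z : ℕ → α → Prop}

theorem mem_zero_of_forall_le_iff (hM : ∀ m f, f ∈ M m ↔ ∀ i ≤ m, Z i f) {f : α} (hZ : Z 0 f) :
    f ∈ M 0 :=
  (hM 0 f).2 fun _ hi => Nat.le_zero.1 hi ▸ hZ

theorem mem_succ_of_forall_le_iff (hM : ∀ m f, f ∈ M m ↔ ∀ i ≤ m, Z i f) {m : ℕ} {f : α}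
    (hf : f ∈ M m) (hZ : Z (m + 1) f) : f ∈ M (m + 1) :=
  (hM (m + 1) f).2 fun i hi =>
    (Nat.le_succ_iff.1 hi).elim ((hM m f).1 hf i) fun h => h ▸ hZ

end Filtration

section Layers

variable {E : Type*} [NormedAddCommGroup E] [InnerProductSpace ℂ E]
  {M S : ℕ → Submodule ℂ E} {Z : ℕ → E → Prop}

theorem eq_zero_of_mem_layer (hM : ∀ m f, f ∈ M m ↔ ∀ i ≤ m, Z i f) (hS0 : S 0 = (M 0)ᗮ)
    (hSsucc : ∀ m, S (m + 1) = M m ⊓ (M (m + 1))ᗮ) {m : ℕ} {f : E} (hf : f ∈ S m)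
    (hZ : Z m f) : f = 0 := by
  have hM' : ∀ m f, f ∈ (M m : Set E) ↔ ∀ i ≤ m, Z i f := hM
  obtain ⟨hfM, hfMorth⟩ : f ∈ M m ∧ f ∈ (M m)ᗮ := by
    cases m with
    | zero => exact ⟨mem_zero_of_forall_le_iff hM' hZ, hS0 ▸ hf⟩
    | succ m =>
      rw [hSsucc] at hf
      exact ⟨mem_succ_of_forall_le_iff hM' hf.1 hZ, hf.2⟩
  exact inner_self_eq_zero.1 (Submodule.inner_right_of_mem_orthogonal hfM hfMorth)

end Layers

theorem stmt5_general
    {H : Type*} [NormedAddCommGroup H] [InnerProductSpace ℂ H]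
    (J : H →ₗ[ℂ] (ℂ × ℂ → ℂ))
    (k : ℂ × ℂ → ℕ → H)
    (hk : ∀ f : H, ∀ w ∈ ball (0 : ℂ) 1 ×ˢ ball (0 : ℂ) 1, ∀ j : ℕ,
      @inner ℂ H _ (k w j) f = d1^[j] (J f) w)
    (M : ℕ → Submodule ℂ H)
    (hM : ∀ (m : ℕ) (f : H),
      f ∈ M m ↔ ∀ i ≤ m, ∀ z ∈ ball (0 : ℂ) 1, d1^[i] (J f) (z, z) = 0)
    (S : ℕ → Submodule ℂ H)
    (hS0 : S 0 = (M 0)ᗮ)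
    (hSsucc : ∀ m : ℕ, S (m + 1) = M m ⊓ (M (m + 1))ᗮ)
    (P : ℕ → H → H)
    (hPorth : ∀ (m : ℕ) (f : H), f - P m f ∈ (S m)ᗮ)
    (m : ℕ) :
    (∀ f ∈ S m, ∀ w ∈ ball (0 : ℂ) 1,
      d1^[m] (J f) (w, w) = @inner ℂ H _ (P m (k (w, w) m)) f) ∧
    (∀ f ∈ S m, ∀ g ∈ S m,
      (∀ z ∈ ball (0 : ℂ) 1, d1^[m] (J f) (z, z) = d1^[m] (J g) (z, z)) → f = g) := by
  have hdiag : ∀ f, ∀ w ∈ ball (0 : ℂ) 1, d1^[m] (J f) (w, w) = inner ℂ (k (w, w) m) f :=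
    fun f w hw => (hk f (w, w) ⟨hw, hw⟩ m).symm
  refine ⟨fun f hf w hw => ?_, fun f hf g hg hfg => ?_⟩
  · rw [hdiag f w hw, inner_eq_inner_of_sub_mem_orthogonal hf (hPorth m _)]
  · rw [← sub_eq_zero]
    refine eq_zero_of_mem_layer hM hS0 hSsucc ((S m).sub_mem hf hg) fun z hz => ?_
    rw [hdiag _ z hz, inner_sub_right, ← hdiag f z hz, ← hdiag g z hz, hfg z hz, sub_self]

/-- Proposition 2.4: (a) for `f ∈ S_m` and `w ∈ 𝔻`,
`(∂₁^m f)(w,w) = ⟨f, P_m k_{(w,w)}^{(m)}⟩`; (b) the map `Γ_m f = (∂₁^m f)|_Δ` is injective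
on `S_m`.  Consequently `K_m(z,w) = ⟨P_m k_{(w,w)}^{(m)}, P_m k_{(z,z)}^{(m)}⟩` is a
reproducing kernel for the image of `Γ_m` with the transported inner product. -/
theorem stmt5
    {H : Type*} [NormedAddCommGroup H] [InnerProductSpace ℂ H] [CompleteSpace H]
    (J : H →ₗ[ℂ] (ℂ × ℂ → ℂ)) (hJinj : Function.Injective J)
    (hJhol : ∀ f : H, DifferentiableOn ℂ (J f) (ball (0 : ℂ) 1 ×ˢ ball (0 : ℂ) 1))
    (k : ℂ × ℂ → ℕ → H)
    (hk : ∀ f : H, ∀ w ∈ ball (0 : ℂ) 1 ×ˢ ball (0 : ℂ) 1, ∀ j : ℕ,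
      @inner ℂ H _ (k w j) f = d1^[j] (J f) w)
    (M : ℕ → Submodule ℂ H)
    (hM : ∀ (m : ℕ) (f : H),
      f ∈ M m ↔ ∀ i ≤ m, ∀ z ∈ ball (0 : ℂ) 1, d1^[i] (J f) (z, z) = 0)
    (hMclosed : ∀ m : ℕ, IsClosed (M m : Set H))
    (S : ℕ → Submodule ℂ H)
    (hS0 : S 0 = (M 0)ᗮ)
    (hSsucc : ∀ m : ℕ, S (m + 1) = M m ⊓ (M (m + 1))ᗮ)
    (P : ℕ → H → H)
    (hPmem : ∀ (m : ℕ) (f : H), P m f ∈ S m)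
    (hPorth : ∀ (m : ℕ) (f : H), f - P m f ∈ (S m)ᗮ)
    (m : ℕ) :
    (∀ f ∈ S m, ∀ w ∈ ball (0 : ℂ) 1,
      d1^[m] (J f) (w, w) = @inner ℂ H _ (P m (k (w, w) m)) f) ∧
    (∀ f ∈ S m, ∀ g ∈ S m,
      (∀ z ∈ ball (0 : ℂ) 1, d1^[m] (J f) (z, z) = d1^[m] (J g) (z, z)) → f = g) :=
  stmt5_general J k hk M hM S hS0 hSsucc P hPorth m
end

section
/- Let k be an even non-negative integer and let f : 𝔻² → ℂ be holomorphic and anti-symmetric, i.e., f(z₁, z₂) = −f(z₂, z₁) for all (z₁, z₂) ∈ 𝔻². If (∂₁^i f)(z, z) = 0 for all z ∈ 𝔻 and all 0 ≤ i ≤ k − 1 (a vacuous condition when k = 0), then (∂₁^k f)(z, z) = 0 for all z ∈ 𝔻. (The anti-symmetric analogue, used in Theorem 2.8(ii), showing S_k = {0} for even k when the Hilbert space consists of anti-symmetric functions.) -/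
/-!
Write `α z = ∂₁^k f (z, z)`. Since the lower derivatives vanish on the diagonal, Cauchy's
estimates give `f (b + s, b) = α b s^k / k! + O(s^(k+1))` uniformly for `b` near a point `a`.
Expanding `f (c, b)` at `b` and `f (b, c)` at `c`, anti-symmetry and evenness of `k` give
`‖α b + α c‖ = O(‖c - b‖)`. Applied to the triangle `a, a + δ, a + 2δ`, this bounds `‖2 α a‖`
by `O(δ)`, so `α a = 0`.
-/

open Metric Set

open Filter Topology Nat

theorem Complex.norm_sub_taylorSum_le {E : Type*} [NormedAddCommGroup E] [NormedSpace ℂ E]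
    [CompleteSpace E] {g : ℂ → E} {c s : ℂ} {R M : ℝ} (k : ℕ) (hR : 0 < R)
    (hg : DiffContOnCl ℂ g (ball c R)) (hM : ∀ z ∈ sphere c R, ‖g z‖ ≤ M) (hs : ‖s‖ ≤ R / 2) :
    ‖g (c + s) - ∑ n ∈ Finset.range (k + 1), (n ! : ℂ)⁻¹ • s ^ n • iteratedDeriv n g c‖ ≤
      2 * M * (‖s‖ / R) ^ (k + 1) := by
  set q := ‖s‖ / R
  have hq0 : 0 ≤ q := by positivity
  have hq : q ≤ 1 / 2 := by rw [div_le_iff₀ hR]; linarith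
  have hM0 : 0 ≤ M := (norm_nonneg _).trans (hM (c + R) (by simp [abs_of_pos hR]))
  have hterm : ∀ n, ‖(n ! : ℂ)⁻¹ • s ^ n • iteratedDeriv n g c‖ ≤ M * q ^ n := by
    intro n
    have hD := Complex.norm_iteratedDeriv_le_of_forall_mem_sphere_norm_le n hR hg hM
    rw [norm_smul, norm_smul, norm_inv, norm_pow, Complex.norm_natCast, div_pow]
    calc (n ! : ℝ)⁻¹ * (‖s‖ ^ n * ‖iteratedDeriv n g c‖)
        ≤ (n ! : ℝ)⁻¹ * (‖s‖ ^ n * (n ! * M / R ^ n)) := by gcongr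
      _ = M * (‖s‖ ^ n / R ^ n) := by field_simp
  have hsum : HasSum (fun n ↦ (n ! : ℂ)⁻¹ • s ^ n • iteratedDeriv n g c) (g (c + s)) := by
    simpa using Complex.hasSum_taylorSeries_on_ball hg.differentiableOn
      (z := c + s) (by rw [mem_ball_iff_norm, add_sub_cancel_left]; linarith)
  have hgeom : HasSum (fun n ↦ M * q ^ (k + 1) * q ^ n) (M * q ^ (k + 1) * (1 - q)⁻¹) :=
    (hasSum_geometric_of_lt_one hq0 (by linarith)).mul_left _
  calc _ ≤ M * q ^ (k + 1) * (1 - q)⁻¹ :=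
        ((hasSum_nat_add_iff' (k + 1)).mpr hsum).norm_le_of_bounded hgeom fun n ↦ by
          simpa only [pow_add, mul_comm, mul_left_comm, mul_assoc] using hterm (n + (k + 1))
    _ ≤ M * q ^ (k + 1) * 2 := by
        gcongr
        exact inv_le_of_inv_le₀ two_pos (by linarith)
    _ = 2 * M * q ^ (k + 1) := by ring

theorem d1_iterate_apply_s13 (f : ℂ × ℂ → ℂ) (i : ℕ) (z w : ℂ) :
    d1^[i] f (z, w) = iteratedDeriv i (fun u ↦ f (u, w)) z := by
  induction i generalizing z with
  | zero => rfl
  | succ i ih =>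
    rw [Function.iterate_succ_apply', iteratedDeriv_succ]
    exact congrArg (deriv · z) (funext ih)

section Diagonal

variable {U : Set ℂ} {f : ℂ × ℂ → ℂ} {k : ℕ} {a : ℂ} {r : ℝ}

theorem exists_norm_sub_d1_iterate_le (hr : 0 < r) (haU : closedBall a (5 * r) ⊆ U)
    (hf : DifferentiableOn ℂ f (U ×ˢ U)) (hvanish : ∀ i < k, ∀ z ∈ U, d1^[i] f (z, z) = 0) :
    ∃ C, ∀ b ∈ closedBall a r, ∀ s : ℂ, ‖s‖ ≤ 2 * r →
      ‖f (b + s, b) - (k ! : ℂ)⁻¹ * s ^ k * d1^[k] f (b, b)‖ ≤ C * ‖s‖ ^ (k + 1) := by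
  have hsmall : closedBall a r ⊆ U := (closedBall_subset_closedBall (by linarith)).trans haU
  obtain ⟨M, hM⟩ := ((isCompact_closedBall a (5 * r)).prod (isCompact_closedBall a r))
    |>.exists_bound_of_continuousOn (hf.continuousOn.mono (prod_mono haU hsmall))
  refine ⟨2 * M / (4 * r) ^ (k + 1), fun b hb s hs ↦ ?_⟩
  have hbig : closedBall b (4 * r) ⊆ closedBall a (5 * r) :=
    closedBall_subset_closedBall' (by linarith [mem_closedBall.mp hb])
  have hg : DiffContOnCl ℂ (fun u ↦ f (u, b)) (ball b (4 * r)) :=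
    (hf.comp (differentiableOn_id.prodMk (differentiableOn_const b))
      fun u hu ↦ ⟨haU (hbig hu), hsmall hb⟩).diffContOnCl_ball subset_rfl
  have htaylor := Complex.norm_sub_taylorSum_le (s := s) k (by positivity) hg
    (fun u hu ↦ hM (u, b) ⟨hbig (sphere_subset_closedBall hu), hb⟩) (by linarith)
  have hlower : ∑ n ∈ Finset.range k, (n ! : ℂ)⁻¹ • s ^ n • iteratedDeriv n (fun u ↦ f (u, b)) b
      = 0 := Finset.sum_eq_zero fun n hn ↦ by
    rw [← d1_iterate_apply_s13, hvanish n (Finset.mem_range.mp hn) b (hsmall hb), smul_zero, smul_zero]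
  rw [Finset.sum_range_succ, hlower, zero_add, ← d1_iterate_apply_s13, smul_eq_mul, smul_eq_mul,
    ← mul_assoc, div_pow] at htaylor
  exact htaylor.trans_eq (by ring)

theorem exists_norm_d1_iterate_add_le (hk : Even k) (hr : 0 < r) (haU : closedBall a (5 * r) ⊆ U)
    (hf : DifferentiableOn ℂ f (U ×ˢ U))
    (hanti : ∀ z₁ ∈ U, ∀ z₂ ∈ U, f (z₁, z₂) = -f (z₂, z₁))
    (hvanish : ∀ i < k, ∀ z ∈ U, d1^[i] f (z, z) = 0) :
    ∃ C, ∀ b ∈ closedBall a r, ∀ c ∈ closedBall a r, b ≠ c →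
      ‖d1^[k] f (b, b) + d1^[k] f (c, c)‖ ≤ C * ‖c - b‖ := by
  have hsmall : closedBall a r ⊆ U := (closedBall_subset_closedBall (by linarith)).trans haU
  obtain ⟨C, hC⟩ := exists_norm_sub_d1_iterate_le hr haU hf hvanish
  refine ⟨2 * k ! * C, fun b hb c hc hbc ↦ ?_⟩
  set s := c - b
  have hs : ‖s‖ ≤ 2 * r := by
    have := dist_triangle_right c b a
    rw [dist_eq_norm] at this
    linarith [mem_closedBall.mp hb, mem_closedBall.mp hc]
  have hs0 : 0 < ‖s‖ := norm_pos_iff.mpr (sub_ne_zero.mpr hbc.symm)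
  have E₁ := hC b hb s hs
  have E₂ := hC c hc (-s) (by rwa [norm_neg])
  rw [add_sub_cancel] at E₁
  rw [show c + -s = b by simp [s], hk.neg_pow, norm_neg] at E₂
  -- the expansions of `f (c, b) = -f (b, c)` share the leading factor `s ^ k = (-s) ^ k`
  have hsplit : (k ! : ℂ)⁻¹ * s ^ k * (d1^[k] f (b, b) + d1^[k] f (c, c)) =
      -((f (c, b) - (k ! : ℂ)⁻¹ * s ^ k * d1^[k] f (b, b)) +
        (f (b, c) - (k ! : ℂ)⁻¹ * s ^ k * d1^[k] f (c, c))) := by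
    rw [hanti b (hsmall hb) c (hsmall hc)]; ring
  have hfac : (0 : ℝ) < (k ! : ℝ)⁻¹ * ‖s‖ ^ k := mul_pos (by positivity) (pow_pos hs0 k)
  refine le_of_mul_le_mul_left ?_ hfac
  calc (k ! : ℝ)⁻¹ * ‖s‖ ^ k * ‖d1^[k] f (b, b) + d1^[k] f (c, c)‖
      = ‖(k ! : ℂ)⁻¹ * s ^ k * (d1^[k] f (b, b) + d1^[k] f (c, c))‖ := by
        rw [norm_mul, norm_mul, norm_inv, norm_pow, Complex.norm_natCast]
    _ ≤ C * ‖s‖ ^ (k + 1) + C * ‖s‖ ^ (k + 1) := by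
        rw [hsplit, norm_neg]; exact (norm_add_le _ _).trans (add_le_add E₁ E₂)
    _ = (k ! : ℝ)⁻¹ * ‖s‖ ^ k * (2 * k ! * C * ‖s‖) := by
        field_simp; ring

end Diagonal

theorem eq_zero_of_norm_add_le_mul_norm_sub {E : Type*} [NormedAddCommGroup E] [NormedSpace ℝ E]
    {α : ℂ → E} {a : ℂ} {r C : ℝ} (hr : 0 < r)
    (h : ∀ b ∈ closedBall a r, ∀ c ∈ closedBall a r, b ≠ c → ‖α b + α c‖ ≤ C * ‖c - b‖) :
    α a = 0 := by
  have hbound : ∀ δ ∈ Ioc 0 (r / 2), ‖α a + α a‖ ≤ 4 * C * δ := by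
    rintro δ ⟨hδ0, hδr⟩
    have hmem : ∀ t : ℝ, 0 ≤ t → t ≤ r → a + t ∈ closedBall a r := fun t ht htr ↦ by
      simpa [abs_of_nonneg ht] using htr
    have hnorm : ∀ t t' : ℝ, 0 ≤ t' - t → ‖(a + t' : ℂ) - (a + t)‖ = t' - t := fun t t' h ↦ by
      rw [add_sub_add_left_eq_sub, ← Complex.ofReal_sub, Complex.norm_real, Real.norm_of_nonneg h]
    have h₁ := h a (mem_closedBall_self hr.le) (a + δ) (hmem δ hδ0.le (by linarith))
      (by simp [hδ0.ne'])
    have h₂ := h (a + δ) (hmem δ hδ0.le (by linarith)) (a + (2 * δ : ℝ))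
      (hmem _ (by linarith) (by linarith)) (by simp [hδ0.ne'])
    have h₃ := h a (mem_closedBall_self hr.le) (a + (2 * δ : ℝ))
      (hmem _ (by linarith) (by linarith)) (by simp [hδ0.ne'])
    rw [hnorm δ (2 * δ) (by linarith)] at h₂
    rw [add_sub_cancel_left, Complex.norm_real, Real.norm_of_nonneg hδ0.le] at h₁
    rw [add_sub_cancel_left, Complex.norm_real, Real.norm_of_nonneg (by linarith)] at h₃
    calc ‖α a + α a‖ = ‖(α a + α (a + δ)) - (α (a + δ) + α (a + (2 * δ : ℝ))) +
          (α a + α (a + (2 * δ : ℝ)))‖ := by congr 1; abel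
      _ ≤ ‖α a + α (a + δ)‖ + ‖α (a + δ) + α (a + (2 * δ : ℝ))‖ +
          ‖α a + α (a + (2 * δ : ℝ))‖ :=
          (norm_add_le _ _).trans (add_le_add_left (norm_sub_le _ _) _)
      _ ≤ 4 * C * δ := by linarith
  have hlim : Tendsto (fun δ : ℝ ↦ 4 * C * δ) (𝓝[>] 0) (𝓝 0) :=
    ((continuous_const_mul (4 * C)).tendsto' 0 0 (mul_zero _)).mono_left nhdsWithin_le_nhds
  have hzero : ‖α a + α a‖ ≤ 0 :=
    ge_of_tendsto hlim (Filter.mem_of_superset (Ioc_mem_nhdsGT (half_pos hr)) hbound)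
  rw [norm_le_zero_iff, ← two_smul ℝ] at hzero
  exact (smul_eq_zero.mp hzero).resolve_left two_ne_zero

/-- anti-symmetric analogue used in Theorem 2.8(ii): for an anti-symmetric
holomorphic function on the bidisc and even `k ≥ 0`, if `∂₁^i f` vanishes on the diagonal
for all `0 ≤ i ≤ k − 1` (vacuous when `k = 0`), then so does `∂₁^k f`. -/
theorem stmt13 (k : ℕ) (hk : Even k) (f : ℂ × ℂ → ℂ)
    (hf : DifferentiableOn ℂ f (ball (0 : ℂ) 1 ×ˢ ball (0 : ℂ) 1))
    (hanti : ∀ z₁ ∈ ball (0 : ℂ) 1, ∀ z₂ ∈ ball (0 : ℂ) 1, f (z₁, z₂) = -f (z₂, z₁))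
    (hvanish : ∀ i < k, ∀ z ∈ ball (0 : ℂ) 1, d1^[i] f (z, z) = 0) :
    ∀ z ∈ ball (0 : ℂ) 1, d1^[k] f (z, z) = 0 := by
  intro a ha
  obtain ⟨ε, hε, hεU⟩ := nhds_basis_closedBall.mem_iff.mp (isOpen_ball.mem_nhds ha)
  have hr : 0 < ε / 5 := by positivity
  have hball : closedBall a (5 * (ε / 5)) ⊆ ball 0 1 := by
    rwa [mul_div_cancel₀ _ (by norm_num : (5 : ℝ) ≠ 0)]
  obtain ⟨C, hC⟩ := exists_norm_d1_iterate_add_le hk hr hball hf hanti hvanish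
  exact eq_zero_of_norm_add_le_mul_norm_sub (α := fun z ↦ d1^[k] f (z, z)) hr hC
end

section
/- Let n ≥ 2 and m ≥ 0 be integers, let φ : 𝔻 → 𝔻 be holomorphic, let c : 𝔻ⁿ → ℂ be holomorphic, and let f : 𝔻ⁿ → ℂ be holomorphic such that (∂₁^i f)(z₁, z₁, z₂, …, z_{n−1}) = 0 for all (z₁, …, z_{n−1}) ∈ 𝔻^{n−1} and all 0 ≤ i ≤ m. Then the holomorphic function g(z₁, …, z_n) := c(z₁, …, z_n) · f(φ(z₁), …, φ(z_n)) satisfies (∂₁^i g)(z₁, z₁, z₂, …, z_{n−1}) = 0 for all (z₁, …, z_{n−1}) ∈ 𝔻^{n−1} and all 0 ≤ i ≤ m. (The pointwise content of Proposition 2.11: each subspace M_{k_n} of functions whose first m ∂₁-derivatives vanish on Δ_n = {(z₁, z₁, z₂, …, z_{n−1})} is invariant under every weighted composition operator.) -/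
open Metric Set

/-!
Restricting to the slice `t ↦ (t, ζ)`, the hypothesis says that `F s = f (s, φ ∘ ζ)` vanishes to
order `> m` at `φ (ζ 0)`, and the slice of the weighted composition is `t ↦ C t * F (φ t)`.
Since `φ t - φ (ζ 0)` vanishes at `ζ 0`, the order of `F ∘ φ` at `ζ 0` is at least that of `F`
at `φ (ζ 0)`, and multiplying by the analytic weight `C` can only raise it further.
-/

/-- The partial derivative with respect to the first variable of a function of `n + 2`
complex variables. -/
noncomputable def d1p (n : ℕ) (f : (Fin (n + 2) → ℂ) → ℂ) : (Fin (n + 2) → ℂ) → ℂ :=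
  fun z => deriv (fun t => f (Function.update z 0 t)) (z 0)

section OneVariable

variable {𝕜 : Type*} [NontriviallyNormedField 𝕜]

theorem iterate_deriv_eq_zero_iff_natCast_le_analyticOrderAt [CharZero 𝕜] [CompleteSpace 𝕜]
    {f : 𝕜 → 𝕜} {x : 𝕜} (hf : AnalyticAt 𝕜 f x) (n : ℕ) :
    (∀ i < n, deriv^[i] f x = 0) ↔ n ≤ analyticOrderAt f x := by
  simp only [natCast_le_analyticOrderAt_iff_iteratedDeriv_eq_zero hf, iteratedDeriv_eq_iterate]

theorem analyticOrderAt_le_analyticOrderAt_mul_comp {C F φ : 𝕜 → 𝕜} {t₀ : 𝕜}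
    (hC : AnalyticAt 𝕜 C t₀) (hF : AnalyticAt 𝕜 F (φ t₀)) (hφ : AnalyticAt 𝕜 φ t₀) :
    analyticOrderAt F (φ t₀) ≤ analyticOrderAt (fun t => C t * F (φ t)) t₀ := by
  have hφ_order : 1 ≤ analyticOrderAt (φ · - φ t₀) t₀ :=
    Order.one_le_iff_ne_zero.mpr <|
      (hφ.sub analyticAt_const).analyticOrderAt_ne_zero.mpr (sub_self _)
  calc analyticOrderAt F (φ t₀)
      ≤ analyticOrderAt F (φ t₀) * analyticOrderAt (φ · - φ t₀) t₀ :=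
        le_mul_of_one_le_right' hφ_order
    _ = analyticOrderAt (F ∘ φ) t₀ := (hF.analyticOrderAt_comp hφ).symm
    _ ≤ analyticOrderAt C t₀ + analyticOrderAt (F ∘ φ) t₀ := le_add_self
    _ = analyticOrderAt (fun t => C t * F (φ t)) t₀ :=
        (analyticOrderAt_mul hC (hF.comp hφ)).symm

theorem iterate_deriv_mul_comp_eq_zero [CharZero 𝕜] [CompleteSpace 𝕜] {C F φ : 𝕜 → 𝕜} {t₀ : 𝕜}
    (hC : AnalyticAt 𝕜 C t₀) (hF : AnalyticAt 𝕜 F (φ t₀)) (hφ : AnalyticAt 𝕜 φ t₀) {m : ℕ}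
    (hF_zero : ∀ i < m, deriv^[i] F (φ t₀) = 0) :
    ∀ i < m, deriv^[i] (fun t => C t * F (φ t)) t₀ = 0 :=
  (iterate_deriv_eq_zero_iff_natCast_le_analyticOrderAt (hC.mul (hF.comp hφ)) m).mpr <|
    ((iterate_deriv_eq_zero_iff_natCast_le_analyticOrderAt hF m).mp hF_zero).trans
      (analyticOrderAt_le_analyticOrderAt_mul_comp hC hF hφ)

end OneVariable

theorem d1p_iterate_cons (n i : ℕ) (f : (Fin (n + 2) → ℂ) → ℂ) (a : ℂ) (ξ : Fin (n + 1) → ℂ) :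
    (d1p n)^[i] f (Fin.cons a ξ) = deriv^[i] (fun t => f (Fin.cons t ξ)) a := by
  induction i generalizing f with
  | zero => rfl
  | succ i ih =>
    have hslice : (fun t => d1p n f (Fin.cons t ξ)) = deriv (fun t => f (Fin.cons t ξ)) := by
      funext t
      simp only [d1p, Fin.update_cons_zero, Fin.cons_zero]
    rw [Function.iterate_succ_apply, ih, hslice, ← Function.iterate_succ_apply]

theorem DifferentiableOn.analyticAt_comp_cons {n : ℕ} {s : Fin (n + 1) → Set ℂ}
    {f : (Fin (n + 1) → ℂ) → ℂ} (hf : DifferentiableOn ℂ f (univ.pi s)) (hs : IsOpen (s 0))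
    {a : ℂ} (ha : a ∈ s 0) {ξ : Fin n → ℂ} (hξ : ∀ l, ξ l ∈ s l.succ) :
    AnalyticAt ℂ (fun t => f (Fin.cons t ξ)) a := by
  have hcons : MapsTo (fun t => (Fin.cons t ξ : Fin (n + 1) → ℂ)) (s 0) (univ.pi s) :=
    fun t ht => mem_univ_pi.mpr (Fin.cases ht hξ)
  exact (hf.comp (differentiable_id.finCons (differentiable_const ξ)).differentiableOn
    hcons).analyticAt (hs.mem_nhds ha)

/-- pointwise content of Proposition 2.11: on the polydisc `𝔻ⁿ` (here
`n + 2 ≥ 2` variables), the space of holomorphic functions whose first `m` partial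
derivatives `∂₁^i` vanish on `Δ_n = {(z₁, z₁, z₂, …, z_{n−1})}` is invariant under every
weighted composition operator `f ↦ c · (f ∘ (φ, …, φ))`. -/
theorem stmt14 (n m : ℕ) (φ : ℂ → ℂ) (c f : (Fin (n + 2) → ℂ) → ℂ)
    (hφmap : MapsTo φ (ball (0 : ℂ) 1) (ball (0 : ℂ) 1))
    (hφ : DifferentiableOn ℂ φ (ball (0 : ℂ) 1))
    (hc : DifferentiableOn ℂ c (Set.univ.pi fun _ : Fin (n + 2) => ball (0 : ℂ) 1))
    (hf : DifferentiableOn ℂ f (Set.univ.pi fun _ : Fin (n + 2) => ball (0 : ℂ) 1))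
    (hvanish : ∀ i ≤ m, ∀ ζ : Fin (n + 1) → ℂ, (∀ l, ζ l ∈ ball (0 : ℂ) 1) →
      (d1p n)^[i] f (Fin.cons (ζ 0) ζ) = 0) :
    ∀ i ≤ m, ∀ ζ : Fin (n + 1) → ℂ, (∀ l, ζ l ∈ ball (0 : ℂ) 1) →
      (d1p n)^[i] (fun z => c z * f (fun l => φ (z l))) (Fin.cons (ζ 0) ζ) = 0 := by
  intro i hi ζ hζ
  have hφζ : ∀ l, φ (ζ l) ∈ ball (0 : ℂ) 1 := fun l => hφmap (hζ l)
  have hslice :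
      (fun t => c (Fin.cons t ζ) * f fun l => φ ((Fin.cons t ζ : Fin (n + 2) → ℂ) l)) =
        fun t => c (Fin.cons t ζ) * f (Fin.cons (φ t) (φ ∘ ζ)) := by
    simp only [← Fin.comp_cons]
    rfl
  have hC := hc.analyticAt_comp_cons isOpen_ball (hζ 0) hζ
  have hF := hf.analyticAt_comp_cons isOpen_ball (hφζ 0) hφζ
  have hφ₀ := hφ.analyticAt (isOpen_ball.mem_nhds (hζ 0))
  rw [d1p_iterate_cons, hslice]
  refine iterate_deriv_mul_comp_eq_zero (m := m + 1) hC hF hφ₀ (fun k hk => ?_) i (by omega)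
  rw [← d1p_iterate_cons]
  exact hvanish k (by omega) (φ ∘ ζ) hφζ
end

section
/- Let n ≥ 2 and m ≥ 1 be integers, let φ : 𝔻 → 𝔻 be holomorphic, let c : 𝔻ⁿ → ℂ be holomorphic, and let f : 𝔻ⁿ → ℂ be holomorphic such that (∂₁^j f)(z₁, z₁, z₂, …, z_{n−1}) = 0 for all (z₁, …, z_{n−1}) ∈ 𝔻^{n−1} and all 0 ≤ j ≤ m − 1. Then for all (z₁, …, z_{n−1}) ∈ 𝔻^{n−1}, ∂₁^m ( z ↦ c(z) · f(φ(z₁), …, φ(z_n)) )(z₁, z₁, z₂, …, z_{n−1}) = c(z₁, z₁, z₂, …, z_{n−1}) · (φ'(z₁))^m · (∂₁^m f)(φ(z₁), φ(z₁), φ(z₂), …, φ(z_{n−1})). (The key computation in Proposition 2.13 identifying the cocycle c_{k_n}(φ, (z₁,…,z_{n−1})) = c(φ, (z₁, z₁, z₂,…,z_{n−1}))·(φ'(z₁))^{k_n}.) -/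
/-!
Along the slice `t ↦ (t, z₂, …)` the function `c · (f ∘ φ)` becomes `t ↦ u t * h (φ t)` with `u`
and `h` holomorphic slices of `c` and `f`. By induction, its `j`-th derivative is
`u · (φ')ʲ · (h⁽ʲ⁾ ∘ φ)` plus a combination of `h ∘ φ, …, h⁽ʲ⁻¹⁾ ∘ φ` with holomorphic
coefficients. At a point of `Δ_n` the slice of `f` passes through `(φ z₁, φ z₁, φ z₂, …)`, where
the hypothesis makes `h, …, h⁽ᵐ⁻¹⁾` vanish at `φ z₁`, so only the leading term survives.
-/

open Metric Set

def compJetSpan (U : Set ℂ) (φ h : ℂ → ℂ) (k : ℕ) : Submodule ℂ (ℂ → ℂ) where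
  carrier := {g | ∃ a : ℕ → ℂ → ℂ, (∀ i, DifferentiableOn ℂ (a i) U) ∧
    EqOn g (fun t => ∑ i ∈ Finset.range k, a i t * deriv^[i] h (φ t)) U}
  zero_mem' := ⟨0, fun _ => differentiableOn_const 0, fun t _ => by simp⟩
  add_mem' := by
    rintro g₁ g₂ ⟨a₁, ha₁, hg₁⟩ ⟨a₂, ha₂, hg₂⟩
    refine ⟨a₁ + a₂, fun i => (ha₁ i).add (ha₂ i), fun t ht => ?_⟩
    simp [hg₁ ht, hg₂ ht, add_mul, Finset.sum_add_distrib]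
  smul_mem' := by
    rintro c g ⟨a, ha, hg⟩
    refine ⟨c • a, fun i => (ha i).const_smul c, fun t ht => ?_⟩
    simp [hg ht, Finset.mul_sum, mul_assoc]

theorem hasDerivAt_mul_iterate_deriv_comp {V : Set ℂ} {φ h b : ℂ → ℂ} {t : ℂ}
    (hb : DifferentiableAt ℂ b t) (hφ : DifferentiableAt ℂ φ t) (hV : IsOpen V)
    (hh : DifferentiableOn ℂ h V) (hφt : φ t ∈ V) (i : ℕ) :
    HasDerivAt (fun s => b s * deriv^[i] h (φ s))
      (deriv b t * deriv^[i] h (φ t) + b t * deriv φ t * deriv^[i + 1] h (φ t)) t := by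
  have hht := ((((hh.analyticOnNhd hV).iterated_deriv i).differentiableOn).differentiableAt
    (hV.mem_nhds hφt)).hasDerivAt
  refine (hb.hasDerivAt.mul (hht.comp t hφ.hasDerivAt)).congr_deriv ?_
  rw [Function.iterate_succ_apply', Function.comp_apply]
  ring

namespace compJetSpan

variable {U V : Set ℂ} {φ h g : ℂ → ℂ} {k : ℕ}

theorem mem_of_eqOn {g' : ℂ → ℂ} (hg' : g' ∈ compJetSpan U φ h k) (hEq : EqOn g g' U) :
    g ∈ compJetSpan U φ h k := by
  obtain ⟨a, ha, hg'⟩ := hg'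
  exact ⟨a, ha, hEq.trans hg'⟩

theorem mul_iterate_deriv_comp_mem {b : ℂ → ℂ} (hb : DifferentiableOn ℂ b U) {i : ℕ}
    (hi : i < k) : (fun t => b t * deriv^[i] h (φ t)) ∈ compJetSpan U φ h k := by
  refine ⟨Pi.single i b, fun l => ?_, fun t _ => ?_⟩
  · rcases eq_or_ne l i with rfl | hl
    · simpa using hb
    · simp [hl]
  · dsimp only
    rw [Finset.sum_eq_single_of_mem i (Finset.mem_range.2 hi) fun l _ hl => by simp [hl]]
    simp

theorem apply_eq_zero (hg : g ∈ compJetSpan U φ h k) {t₀ : ℂ} (ht₀ : t₀ ∈ U)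
    (hvanish : ∀ i < k, deriv^[i] h (φ t₀) = 0) : g t₀ = 0 := by
  obtain ⟨a, -, hg⟩ := hg
  rw [hg ht₀]
  exact Finset.sum_eq_zero fun i hi => by rw [hvanish i (Finset.mem_range.1 hi), mul_zero]

variable (hV : IsOpen V) (hφ : DifferentiableOn ℂ φ U) (hφUV : MapsTo φ U V)
  (hh : DifferentiableOn ℂ h V)
include hV hφ hφUV hh

theorem differentiableOn (hg : g ∈ compJetSpan U φ h k) : DifferentiableOn ℂ g U := by
  obtain ⟨a, ha, hg⟩ := hg
  refine DifferentiableOn.congr ?_ hg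
  exact DifferentiableOn.fun_sum fun i _ => (ha i).mul <|
    ((hh.analyticOnNhd hV).iterated_deriv i).differentiableOn.comp hφ hφUV

theorem deriv_mem (hU : IsOpen U) (hg : g ∈ compJetSpan U φ h k) :
    deriv g ∈ compJetSpan U φ h (k + 1) := by
  obtain ⟨a, ha, hg⟩ := hg
  have hderiv : ∀ t ∈ U, HasDerivAt g (∑ i ∈ Finset.range k,
      (deriv (a i) t * deriv^[i] h (φ t)
        + a i t * deriv φ t * deriv^[i + 1] h (φ t))) t := by
    intro t ht
    refine HasDerivAt.congr_of_eventuallyEq ?_ (hg.eventuallyEq_of_mem (hU.mem_nhds ht))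
    exact HasDerivAt.fun_sum fun i _ => hasDerivAt_mul_iterate_deriv_comp
      ((ha i).differentiableAt (hU.mem_nhds ht)) (hφ.differentiableAt (hU.mem_nhds ht)) hV hh
      (hφUV ht) i
  refine mem_of_eqOn (g' := ∑ i ∈ Finset.range k,
      ((fun t => deriv (a i) t * deriv^[i] h (φ t))
        + fun t => (a i t * deriv φ t) * deriv^[i + 1] h (φ t))) ?_ ?_
  · refine Submodule.sum_mem _ fun i hi => add_mem ?_ ?_
    · exact mul_iterate_deriv_comp_mem
        (((ha i).analyticOnNhd hU).deriv.differentiableOn) (by simp at hi; omega)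
    · exact mul_iterate_deriv_comp_mem
        ((ha i).mul ((hφ.analyticOnNhd hU).deriv.differentiableOn)) (by simp at hi; omega)
  · intro t ht
    simp only [(hderiv t ht).deriv, Finset.sum_apply, Pi.add_apply]

end compJetSpan

section

variable {U V : Set ℂ} {φ u h : ℂ → ℂ} (hU : IsOpen U) (hV : IsOpen V)
  (hφ : DifferentiableOn ℂ φ U) (hφUV : MapsTo φ U V) (hu : DifferentiableOn ℂ u U)
  (hh : DifferentiableOn ℂ h V)
include hU hV hφ hφUV hu hh

theorem iterate_deriv_mul_comp_sub_mem_compJetSpan (j : ℕ) :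
    (deriv^[j] (fun t => u t * h (φ t)) - fun t => u t * deriv φ t ^ j * deriv^[j] h (φ t))
      ∈ compJetSpan U φ h j := by
  induction j with
  | zero => simp
  | succ j ih =>
    set r := deriv^[j] (fun t => u t * h (φ t)) - fun t => u t * deriv φ t ^ j * deriv^[j] h (φ t)
    have hL : DifferentiableOn ℂ (fun t => u t * deriv φ t ^ j) U :=
      hu.mul ((hφ.analyticOnNhd hU).deriv.differentiableOn.pow j)
    refine compJetSpan.mem_of_eqOn (g' := deriv r
        + fun t => deriv (fun s => u s * deriv φ s ^ j) t * deriv^[j] h (φ t))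
      (add_mem (compJetSpan.deriv_mem hV hφ hφUV hh hU ih)
        (compJetSpan.mul_iterate_deriv_comp_mem
          ((hL.analyticOnNhd hU).deriv.differentiableOn) (lt_add_one j))) fun t ht => ?_
    have hr := (compJetSpan.differentiableOn hV hφ hφUV hh ih).differentiableAt (hU.mem_nhds ht)
    have hLt := hasDerivAt_mul_iterate_deriv_comp (hL.differentiableAt (hU.mem_nhds ht))
      (hφ.differentiableAt (hU.mem_nhds ht)) hV hh (hφUV ht) j
    have hsplit : deriv^[j] (fun t => u t * h (φ t))
        = r + fun t => u t * deriv φ t ^ j * deriv^[j] h (φ t) := (sub_add_cancel _ _).symm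
    simp only [Function.iterate_succ_apply', hsplit, Pi.sub_apply, Pi.add_apply,
      deriv_add hr hLt.differentiableAt, hLt.deriv]
    ring

theorem iterate_deriv_mul_comp_eq_of_iterate_deriv_eq_zero {j : ℕ} {t₀ : ℂ} (ht₀ : t₀ ∈ U)
    (hvanish : ∀ i < j, deriv^[i] h (φ t₀) = 0) :
    deriv^[j] (fun t => u t * h (φ t)) t₀ = u t₀ * deriv φ t₀ ^ j * deriv^[j] h (φ t₀) :=
  sub_eq_zero.1 <| compJetSpan.apply_eq_zero
    (iterate_deriv_mul_comp_sub_mem_compJetSpan hU hV hφ hφUV hu hh j) ht₀ hvanish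

end

theorem DifferentiableOn.comp_update {𝕜 ι E : Type*} [NontriviallyNormedField 𝕜] [Fintype ι]
    [DecidableEq ι] [NormedAddCommGroup E] [NormedSpace 𝕜 E] {s : ι → Set 𝕜}
    {F : (ι → 𝕜) → E} (hF : DifferentiableOn 𝕜 F (univ.pi s)) {z : ι → 𝕜}
    (hz : z ∈ univ.pi s) (i : ι) : DifferentiableOn 𝕜 (fun t => F (Function.update z i t)) (s i) :=
  hF.comp (Differentiable.differentiableOn fun t => (hasFDerivAt_update z t).differentiableAt)
    fun _ ht => (update_mem_pi_iff_of_mem hz).2 fun _ => ht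

theorem d1p_iterate_apply (n j : ℕ) (F : (Fin (n + 2) → ℂ) → ℂ) (z : Fin (n + 2) → ℂ) :
    (d1p n)^[j] F z = deriv^[j] (fun t => F (Function.update z 0 t)) (z 0) := by
  induction j generalizing z with
  | zero => simp
  | succ j ih =>
    rw [Function.iterate_succ_apply', Function.iterate_succ_apply']
    simp only [d1p, ih, Function.update_self, Function.update_idem]

theorem stmt15_general (n m : ℕ) (φ : ℂ → ℂ) (c f : (Fin (n + 2) → ℂ) → ℂ)
    (hφmap : MapsTo φ (ball (0 : ℂ) 1) (ball (0 : ℂ) 1))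
    (hφ : DifferentiableOn ℂ φ (ball (0 : ℂ) 1))
    (hc : DifferentiableOn ℂ c (Set.univ.pi fun _ : Fin (n + 2) => ball (0 : ℂ) 1))
    (hf : DifferentiableOn ℂ f (Set.univ.pi fun _ : Fin (n + 2) => ball (0 : ℂ) 1))
    (hvanish : ∀ j < m, ∀ ζ : Fin (n + 1) → ℂ, (∀ l, ζ l ∈ ball (0 : ℂ) 1) →
      (d1p n)^[j] f (Fin.cons (ζ 0) ζ) = 0) :
    ∀ ζ : Fin (n + 1) → ℂ, (∀ l, ζ l ∈ ball (0 : ℂ) 1) →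
      (d1p n)^[m] (fun z => c z * f (fun l => φ (z l))) (Fin.cons (ζ 0) ζ)
        = c (Fin.cons (ζ 0) ζ) * (deriv φ (ζ 0)) ^ m
            * (d1p n)^[m] f (Fin.cons (φ (ζ 0)) fun l => φ (ζ l)) := by
  intro ζ hζ
  set z : Fin (n + 2) → ℂ := Fin.cons (ζ 0) ζ
  have hz : z ∈ univ.pi fun _ => ball (0 : ℂ) 1 := fun l _ => Fin.cases (hζ 0) hζ l
  have hφz : φ ∘ z = Fin.cons (φ (ζ 0)) fun l => φ (ζ l) := Fin.comp_cons φ _ _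
  have hφz_mem : φ ∘ z ∈ univ.pi fun _ => ball (0 : ℂ) 1 := fun l _ => hφmap (hz l trivial)
  have hslice : (fun t => c (Function.update z 0 t) * f fun l => φ (Function.update z 0 t l))
      = fun t => c (Function.update z 0 t) * f (Function.update (φ ∘ z) 0 (φ t)) := by
    simp only [← Function.comp_update]
    rfl
  rw [d1p_iterate_apply, hslice, ← hφz, d1p_iterate_apply n m f,
    iterate_deriv_mul_comp_eq_of_iterate_deriv_eq_zero isOpen_ball isOpen_ball hφ hφmap
      (hc.comp_update hz 0) (hf.comp_update hφz_mem 0) (hz 0 trivial), Function.update_eq_self]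
  · rfl
  · intro i hi
    have := hvanish i hi (fun l => φ (ζ l)) fun l => hφmap (hζ l)
    rwa [← hφz, d1p_iterate_apply] at this

/-- the key computation in Proposition 2.13: on the polydisc `𝔻ⁿ` (here
`n + 2 ≥ 2` variables), if the first `m − 1` partial derivatives `∂₁^j f` vanish on
`Δ_n = {(z₁, z₁, z₂, …, z_{n−1})}`, then
`∂₁^m (z ↦ c(z)·f(φ(z₁),…,φ(z_n)))` at a point of `Δ_n` equals
`c(z₁, z₁, z₂, …, z_{n−1}) · (φ'(z₁))^m · (∂₁^m f)(φ(z₁), φ(z₁), φ(z₂), …, φ(z_{n−1}))`. -/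
theorem stmt15 (n m : ℕ) (hm : 1 ≤ m) (φ : ℂ → ℂ) (c f : (Fin (n + 2) → ℂ) → ℂ)
    (hφmap : MapsTo φ (ball (0 : ℂ) 1) (ball (0 : ℂ) 1))
    (hφ : DifferentiableOn ℂ φ (ball (0 : ℂ) 1))
    (hc : DifferentiableOn ℂ c (Set.univ.pi fun _ : Fin (n + 2) => ball (0 : ℂ) 1))
    (hf : DifferentiableOn ℂ f (Set.univ.pi fun _ : Fin (n + 2) => ball (0 : ℂ) 1))
    (hvanish : ∀ j < m, ∀ ζ : Fin (n + 1) → ℂ, (∀ l, ζ l ∈ ball (0 : ℂ) 1) →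
      (d1p n)^[j] f (Fin.cons (ζ 0) ζ) = 0) :
    ∀ ζ : Fin (n + 1) → ℂ, (∀ l, ζ l ∈ ball (0 : ℂ) 1) →
      (d1p n)^[m] (fun z => c z * f (fun l => φ (z l))) (Fin.cons (ζ 0) ζ)
        = c (Fin.cons (ζ 0) ζ) * (deriv φ (ζ 0)) ^ m
            * (d1p n)^[m] f (Fin.cons (φ (ζ 0)) fun l => φ (ζ l)) :=
  stmt15_general n m φ c f hφmap hφ hc hf hvanish
end

section
/- For every integer n ≥ 0, every w ∈ 𝔻, and j = 1, 2, one has P_n M_j* P_n k_{(w,w)}^{(n)} = conj(w) · P_n k_{(w,w)}^{(n)}. In other words, the compression to S_n of the adjoint of each coordinate multiplication operator has the projected kernel vectors P_n k_{(w,w)}^{(n)} as eigenvectors with eigenvalue conj(w). (Proposition 3.5: via the unitary Γ_n, the compression P_n M_{z_j}*|_{S_n} is the adjoint of the multiplication operator on the reduced reproducing kernel Hilbert space A_n.) -/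
/-!
Write `k = k_{(w,w)}^{(n)}` and `A` for either `M₁` or `M₂`. Since `S_n = M_{n-1} ⊓ M_nᗮ` and
`M_n` is closed, a vector of `M_{n-1}` orthogonal to `S_n` lies in `M_n`, hence is orthogonal to
`k`. As `A` preserves `M_{n-1}`, this applies to `A g - P_n (A g)` for `g ∈ S_n`, so
`⟪g, P_n A* P_n k⟫ = ⟪A g, k⟫`. By the Leibniz rule the `n`-th `∂₁`-derivative of `z_j g` at
`(w, w)` is `w` times that of `g`, because the lower ones vanish there; thus
`⟪A g, k⟫ = conj w ⟪g, k⟫ = ⟪g, conj w • P_n k⟫` for all `g ∈ S_n`.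
-/

open Metric Set

open scoped InnerProductSpace ComplexConjugate

namespace Submodule

variable {𝕜 E : Type*} [RCLike 𝕜] [NormedAddCommGroup E] [InnerProductSpace 𝕜 E]

theorem inf_orthogonal_inf_orthogonal_eq {N L : Submodule 𝕜 E} [N.HasOrthogonalProjection]
    (h : N ≤ L) : L ⊓ (L ⊓ Nᗮ)ᗮ = N := by
  nth_rw 1 [← sup_orthogonal_inf_of_hasOrthogonalProjection h]
  rw [inf_comm Nᗮ, sup_inf_assoc_of_le _ (N.le_orthogonal_orthogonal.trans
    (orthogonal_le inf_le_right)), inf_orthogonal_eq_bot, sup_bot_eq]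

theorem eq_starProjection_of_forall {S : Submodule 𝕜 E} [S.HasOrthogonalProjection]
    {P : E → E} (hmem : ∀ f, P f ∈ S) (horth : ∀ f, f - P f ∈ Sᗮ) : P = S.starProjection :=
  funext fun f => (eq_starProjection_of_mem_of_inner_eq_zero (hmem f)
    ((mem_orthogonal' _ _).1 (horth f))).symm

theorem starProjection_adjoint_starProjection_eq_smul [CompleteSpace E]
    {S L N : Submodule 𝕜 E} [N.HasOrthogonalProjection] [S.HasOrthogonalProjection]
    (hS : S = L ⊓ Nᗮ) (hNL : N ≤ L) {A : E →L[𝕜] E} (hA : ∀ g ∈ L, A g ∈ L)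
    {K : E} (hK : K ∈ Nᗮ) {c : 𝕜} (hAK : ∀ g ∈ S, ⟪K, A g⟫_𝕜 = c * ⟪K, g⟫_𝕜) :
    S.starProjection (A.adjoint (S.starProjection K)) = conj c • S.starProjection K := by
  set p := S.starProjection
  have hSL : S ≤ L := hS ▸ inf_le_left
  refine ext_inner_left 𝕜 fun v => ?_
  have hN : A (p v) - p (A (p v)) ∈ N := by
    rw [← inf_orthogonal_inf_orthogonal_eq hNL, ← hS]
    exact ⟨L.sub_mem (hA _ (hSL (S.starProjection_apply_mem v)))
      (hSL (S.starProjection_apply_mem _)), sub_starProjection_mem_orthogonal _⟩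
  calc ⟪v, p (A.adjoint (p K))⟫_𝕜 = ⟪p (A (p v)), K⟫_𝕜 := by
        rw [← inner_starProjection_left_eq_right, ContinuousLinearMap.adjoint_inner_right,
          inner_starProjection_left_eq_right]
    _ = ⟪A (p v), K⟫_𝕜 := by
        rw [eq_comm, ← sub_eq_zero, ← inner_sub_left]
        exact (mem_orthogonal _ _).1 hK _ hN
    _ = conj c * ⟪p v, K⟫_𝕜 := by
        rw [← inner_conj_symm, hAK _ (S.starProjection_apply_mem v), map_mul, inner_conj_symm]
    _ = ⟪v, conj c • p K⟫_𝕜 := by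
        rw [inner_smul_right, inner_starProjection_left_eq_right]

end Submodule

theorem iteratedDeriv_mul_eq_of_iteratedDeriv_eq_zero {𝕜 𝔸 : Type*} [NontriviallyNormedField 𝕜]
    [NormedRing 𝔸] [NormedAlgebra 𝕜 𝔸] {n : ℕ} {φ F : 𝕜 → 𝔸} {x : 𝕜}
    (hφ : ContDiffAt 𝕜 n φ x) (hF : ContDiffAt 𝕜 n F x)
    (hF0 : ∀ i < n, iteratedDeriv i F x = 0) :
    iteratedDeriv n (fun y => φ y * F y) x = φ x * iteratedDeriv n F x := by
  rw [iteratedDeriv_fun_mul hφ hF, Finset.sum_range_succ', Finset.sum_eq_zero]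
  · simp
  · intro i hi
    rw [hF0 _ (by rw [Finset.mem_range] at hi; omega), mul_zero]

theorem iterate_d1_apply_s19 (f : ℂ × ℂ → ℂ) (i : ℕ) (z c : ℂ) :
    d1^[i] f (z, c) = iteratedDeriv i (fun y => f (y, c)) z := by
  induction i generalizing z with
  | zero => rfl
  | succ i ih =>
    rw [Function.iterate_succ_apply', iteratedDeriv_succ]
    exact congrArg (deriv · z) (funext ih)

theorem contDiffAt_slice {f : ℂ × ℂ → ℂ}
    (hf : DifferentiableOn ℂ f (ball (0 : ℂ) 1 ×ˢ ball (0 : ℂ) 1)) {c z : ℂ}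
    (hc : c ∈ ball (0 : ℂ) 1) (hz : z ∈ ball (0 : ℂ) 1) (n : WithTop ℕ∞) :
    ContDiffAt ℂ n (fun y => f (y, c)) z :=
  ((hf.comp (differentiableOn_id.prodMk (differentiableOn_const c)) fun _ hy => ⟨hy, hc⟩).contDiffOn
    isOpen_ball).contDiffAt (isOpen_ball.mem_nhds hz)

section DiagonalJets

variable {H : Type*} [NormedAddCommGroup H] [InnerProductSpace ℂ H]

def IsDiagonalMultiplier (J : H →ₗ[ℂ] (ℂ × ℂ → ℂ)) (A : H → H) : Prop :=
  ∀ f : H, ∀ w ∈ ball (0 : ℂ) 1, ∀ n : ℕ, (∀ i < n, d1^[i] (J f) (w, w) = 0) →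
    d1^[n] (J (A f)) (w, w) = w * d1^[n] (J f) (w, w)

theorem isDiagonalMultiplier_of_mul {J : H →ₗ[ℂ] (ℂ × ℂ → ℂ)}
    (hJhol : ∀ f : H, DifferentiableOn ℂ (J f) (ball (0 : ℂ) 1 ×ˢ ball (0 : ℂ) 1))
    {φ : ℂ × ℂ → ℂ} (hφ : DifferentiableOn ℂ φ (ball (0 : ℂ) 1 ×ˢ ball (0 : ℂ) 1))
    (hφw : ∀ w ∈ ball (0 : ℂ) 1, φ (w, w) = w) {A : H → H}
    (hA : ∀ f : H, ∀ z ∈ ball (0 : ℂ) 1 ×ˢ ball (0 : ℂ) 1, J (A f) z = φ z * J f z) :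
    IsDiagonalMultiplier J A := by
  intro f w hw n hlow
  simp only [iterate_d1_apply_s19] at hlow ⊢
  have hslice : (fun y => J (A f) (y, w)) =ᶠ[nhds w] fun y => φ (y, w) * J f (y, w) :=
    Filter.eventually_of_mem (isOpen_ball.mem_nhds hw) fun y hy => hA f (y, w) ⟨hy, hw⟩
  rw [hslice.iteratedDeriv_eq, iteratedDeriv_mul_eq_of_iteratedDeriv_eq_zero
    (contDiffAt_slice hφ hw hw n) (contDiffAt_slice (hJhol f) hw hw n) hlow, hφw w hw]

theorem IsDiagonalMultiplier.iterate_d1_eq_zero {J : H →ₗ[ℂ] (ℂ × ℂ → ℂ)} {A : H → H}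
    (hA : IsDiagonalMultiplier J A) {n : ℕ} {f : H}
    (hf : ∀ i < n, ∀ z ∈ ball (0 : ℂ) 1, d1^[i] (J f) (z, z) = 0) :
    ∀ i < n, ∀ z ∈ ball (0 : ℂ) 1, d1^[i] (J (A f)) (z, z) = 0 := fun i hi z hz => by
  rw [hA f z hz i fun j hj => hf j (hj.trans hi) z hz, hf i hi z hz, mul_zero]

theorem exists_eq_inf_orthogonal {J : H →ₗ[ℂ] (ℂ × ℂ → ℂ)} {M : ℕ → Submodule ℂ H}
    (hM : ∀ (m : ℕ) (f : H),
      f ∈ M m ↔ ∀ i ≤ m, ∀ z ∈ ball (0 : ℂ) 1, d1^[i] (J f) (z, z) = 0)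
    {S : ℕ → Submodule ℂ H} (hS0 : S 0 = (M 0)ᗮ)
    (hSsucc : ∀ m : ℕ, S (m + 1) = M m ⊓ (M (m + 1))ᗮ) (n : ℕ) :
    ∃ L : Submodule ℂ H, S n = L ⊓ (M n)ᗮ ∧
      ∀ f : H, f ∈ L ↔ ∀ i < n, ∀ z ∈ ball (0 : ℂ) 1, d1^[i] (J f) (z, z) = 0 := by
  cases n with
  | zero => exact ⟨⊤, by rw [hS0, top_inf_eq], by simp⟩
  | succ m => exact ⟨M m, hSsucc m, by simpa only [Nat.lt_succ_iff] using hM m⟩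

theorem starProjection_adjoint_starProjection_kernel_eq_smul [CompleteSpace H]
    {J : H →ₗ[ℂ] (ℂ × ℂ → ℂ)} {k : ℂ × ℂ → ℕ → H}
    (hk : ∀ f : H, ∀ w ∈ ball (0 : ℂ) 1 ×ˢ ball (0 : ℂ) 1, ∀ j : ℕ,
      ⟪k w j, f⟫_ℂ = d1^[j] (J f) w)
    {M : ℕ → Submodule ℂ H}
    (hM : ∀ (m : ℕ) (f : H),
      f ∈ M m ↔ ∀ i ≤ m, ∀ z ∈ ball (0 : ℂ) 1, d1^[i] (J f) (z, z) = 0)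
    (hMclosed : ∀ m : ℕ, IsClosed (M m : Set H))
    {S : ℕ → Submodule ℂ H} (hS0 : S 0 = (M 0)ᗮ)
    (hSsucc : ∀ m : ℕ, S (m + 1) = M m ⊓ (M (m + 1))ᗮ)
    {A : H →L[ℂ] H} (hA : IsDiagonalMultiplier J A) (n : ℕ) [(S n).HasOrthogonalProjection]
    {w : ℂ} (hw : w ∈ ball (0 : ℂ) 1) :
    (S n).starProjection (A.adjoint ((S n).starProjection (k (w, w) n)))
      = conj w • (S n).starProjection (k (w, w) n) := by
  obtain ⟨L, hSL, hL⟩ := exists_eq_inf_orthogonal hM hS0 hSsucc n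
  have : CompleteSpace (M n) := (hMclosed n).completeSpace_coe
  have hK : k (w, w) n ∈ (M n)ᗮ := (Submodule.mem_orthogonal' _ _).2 fun f hf => by
    rw [hk f _ ⟨hw, hw⟩]
    exact (hM n f).1 hf n le_rfl w hw
  refine Submodule.starProjection_adjoint_starProjection_eq_smul hSL ?_ ?_ hK ?_
  · exact fun f hf => (hL f).2 fun i hi => (hM n f).1 hf i hi.le
  · exact fun f hf => (hL _).2 (hA.iterate_d1_eq_zero ((hL f).1 hf))
  · intro g hg
    rw [hk _ _ ⟨hw, hw⟩, hk _ _ ⟨hw, hw⟩]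
    exact hA g w hw n fun i hi => (hL g).1 (hSL ▸ hg).1 i hi w hw

end DiagonalJets

theorem stmt19_general
    {H : Type*} [NormedAddCommGroup H] [InnerProductSpace ℂ H] [CompleteSpace H]
    (J : H →ₗ[ℂ] (ℂ × ℂ → ℂ))
    (hJhol : ∀ f : H, DifferentiableOn ℂ (J f) (ball (0 : ℂ) 1 ×ˢ ball (0 : ℂ) 1))
    (k : ℂ × ℂ → ℕ → H)
    (hk : ∀ f : H, ∀ w ∈ ball (0 : ℂ) 1 ×ˢ ball (0 : ℂ) 1, ∀ j : ℕ,
      @inner ℂ H _ (k w j) f = d1^[j] (J f) w)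
    (M : ℕ → Submodule ℂ H)
    (hM : ∀ (m : ℕ) (f : H),
      f ∈ M m ↔ ∀ i ≤ m, ∀ z ∈ ball (0 : ℂ) 1, d1^[i] (J f) (z, z) = 0)
    (hMclosed : ∀ m : ℕ, IsClosed (M m : Set H))
    (S : ℕ → Submodule ℂ H)
    (hS0 : S 0 = (M 0)ᗮ)
    (hSsucc : ∀ m : ℕ, S (m + 1) = M m ⊓ (M (m + 1))ᗮ)
    (P : ℕ → H → H)
    (hPmem : ∀ (m : ℕ) (f : H), P m f ∈ S m)
    (hPorth : ∀ (m : ℕ) (f : H), f - P m f ∈ (S m)ᗮ)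
    (M₁ M₂ : H →L[ℂ] H)
    (hM₁ : ∀ f : H, ∀ z ∈ ball (0 : ℂ) 1 ×ˢ ball (0 : ℂ) 1, J (M₁ f) z = z.1 * J f z)
    (hM₂ : ∀ f : H, ∀ z ∈ ball (0 : ℂ) 1 ×ˢ ball (0 : ℂ) 1, J (M₂ f) z = z.2 * J f z) :
    ∀ n : ℕ, ∀ w ∈ ball (0 : ℂ) 1,
      P n (ContinuousLinearMap.adjoint M₁ (P n (k (w, w) n)))
          = (starRingEnd ℂ) w • P n (k (w, w) n) ∧
      P n (ContinuousLinearMap.adjoint M₂ (P n (k (w, w) n)))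
          = (starRingEnd ℂ) w • P n (k (w, w) n) := by
  intro n w hw
  have hSclosed : IsClosed (S n : Set H) := by
    cases n with
    | zero => exact hS0 ▸ Submodule.isClosed_orthogonal _
    | succ m => exact hSsucc m ▸ (hMclosed m).inter (Submodule.isClosed_orthogonal _)
  have : CompleteSpace (S n) := hSclosed.completeSpace_coe
  rw [Submodule.eq_starProjection_of_forall (hPmem n) (hPorth n)]
  exact ⟨starProjection_adjoint_starProjection_kernel_eq_smul hk hM hMclosed hS0 hSsucc
      (isDiagonalMultiplier_of_mul hJhol differentiableOn_fst (fun _ _ => rfl) hM₁) n hw,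
    starProjection_adjoint_starProjection_kernel_eq_smul hk hM hMclosed hS0 hSsucc
      (isDiagonalMultiplier_of_mul hJhol differentiableOn_snd (fun _ _ => rfl) hM₂) n hw⟩

/-- Proposition 3.5: the compression to `S_n` of the adjoint of each
coordinate multiplication operator has the projected kernel vectors `P_n k_{(w,w)}^{(n)}`
as eigenvectors with eigenvalue `conj(w)`:
`P_n M_j* P_n k_{(w,w)}^{(n)} = conj(w) · P_n k_{(w,w)}^{(n)}` for `j = 1, 2`. -/
theorem stmt19
    {H : Type*} [NormedAddCommGroup H] [InnerProductSpace ℂ H] [CompleteSpace H]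
    (J : H →ₗ[ℂ] (ℂ × ℂ → ℂ)) (hJinj : Function.Injective J)
    (hJhol : ∀ f : H, DifferentiableOn ℂ (J f) (ball (0 : ℂ) 1 ×ˢ ball (0 : ℂ) 1))
    (k : ℂ × ℂ → ℕ → H)
    (hk : ∀ f : H, ∀ w ∈ ball (0 : ℂ) 1 ×ˢ ball (0 : ℂ) 1, ∀ j : ℕ,
      @inner ℂ H _ (k w j) f = d1^[j] (J f) w)
    (M : ℕ → Submodule ℂ H)
    (hM : ∀ (m : ℕ) (f : H),
      f ∈ M m ↔ ∀ i ≤ m, ∀ z ∈ ball (0 : ℂ) 1, d1^[i] (J f) (z, z) = 0)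
    (hMclosed : ∀ m : ℕ, IsClosed (M m : Set H))
    (S : ℕ → Submodule ℂ H)
    (hS0 : S 0 = (M 0)ᗮ)
    (hSsucc : ∀ m : ℕ, S (m + 1) = M m ⊓ (M (m + 1))ᗮ)
    (P : ℕ → H → H)
    (hPmem : ∀ (m : ℕ) (f : H), P m f ∈ S m)
    (hPorth : ∀ (m : ℕ) (f : H), f - P m f ∈ (S m)ᗮ)
    (M₁ M₂ : H →L[ℂ] H)
    (hM₁ : ∀ f : H, ∀ z ∈ ball (0 : ℂ) 1 ×ˢ ball (0 : ℂ) 1, J (M₁ f) z = z.1 * J f z)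
    (hM₂ : ∀ f : H, ∀ z ∈ ball (0 : ℂ) 1 ×ˢ ball (0 : ℂ) 1, J (M₂ f) z = z.2 * J f z) :
    ∀ n : ℕ, ∀ w ∈ ball (0 : ℂ) 1,
      P n (ContinuousLinearMap.adjoint M₁ (P n (k (w, w) n)))
          = (starRingEnd ℂ) w • P n (k (w, w) n) ∧
      P n (ContinuousLinearMap.adjoint M₂ (P n (k (w, w) n)))
          = (starRingEnd ℂ) w • P n (k (w, w) n) :=
  stmt19_general J hJhol k hk M hM hMclosed S hS0 hSsucc P hPmem hPorth M₁ M₂ hM₁ hM₂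
end
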